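/- arXiv:1712.01597 — 9 statements merged into one kernel-verified Lean document; each statement's English description precedes it below -/
import Mathlib

section
/- For every integer p ≥ 1 there exists a constant C = C(p) > 0 with the following property. Let N ≥ 1 be an integer, let 𝒜 ⊂ ℤ be an admissible set with |a| ≤ N for all a ∈ 𝒜, let a_1, …, a_p be pairwise distinct elements of 𝒜, and let m ∈ [1,2]. Then the p×p determinant D whose (j,i) entry (1 ≤ i,j ≤ p) is the j-th derivative at m of the function t ↦ √(a_i² + t) satisfies |D| ≥ C N^{−2p²}. -/
/-!
With `x i = a i ^ 2 + m ∈ [1, 3N²]`, the `(j+1)`-st derivative of `t ↦ √(a i ^ 2 + t)` at `m`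
is `c (j+1) * (√(x i))⁻¹ * (x i)⁻¹ ^ j`, where `c n = (1/2)(1/2 - 1)⋯(1/2 - n + 1) ≠ 0`.
So the determinant is `∏ c * ∏ (√(x i))⁻¹` times the Vandermonde determinant of the `(x i)⁻¹`.
Admissibility and injectivity make the squares `a i ^ 2` distinct integers, so
`|x i - x k| ≥ 1` and `|(x k)⁻¹ - (x i)⁻¹| ≥ 1 / (x i * x k) ≥ (3N²)⁻²`. With `M = 3N²`,
the `p` diagonal factors and the `p(p-1)/2` Vandermonde factors give `|D| ≥ ∏ |c| / M ^ (p²)`.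
-/

open Real Finset Matrix Polynomial

def Admissible (A : Set ℤ) : Prop := ∀ j ∈ A, j ≠ 0 → -j ∉ A

lemma Admissible.sq_ne_sq {A : Set ℤ} (hA : Admissible A) {x y : ℤ} (hx : x ∈ A)
    (hy : y ∈ A) (hxy : x ≠ y) : x ^ 2 ≠ y ^ 2 := by
  intro h
  rcases sq_eq_sq_iff_eq_or_eq_neg.1 h with h | rfl
  · exact hxy h
  · have hy0 : y ≠ 0 := by rintro rfl; exact hxy neg_zero
    exact hA y hy hy0 hx

lemma descPochhammer_eval_ne_zero {R : Type*} [CommRing R] [IsDomain R] {r : R}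
    (hr : ∀ k : ℕ, r ≠ k) (n : ℕ) : (descPochhammer R n).eval r ≠ 0 := by
  rw [descPochhammer_eval_eq_prod_range]
  exact prod_ne_zero_iff.2 fun k _ => sub_ne_zero.2 (hr k)

lemma iteratedDeriv_sqrt_const_add (n : ℕ) (q t : ℝ) :
    iteratedDeriv n (fun s => √(q + s)) t =
      (descPochhammer ℝ n).eval (1 / 2) * (q + t) ^ ((1 : ℝ) / 2 - n) := by
  simp_rw [sqrt_eq_rpow]
  rw [iteratedDeriv_comp_const_add n (fun x => x ^ (1 / 2 : ℝ)) q, iteratedDeriv_eq_iterate]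
  exact iter_deriv_rpow_const _ _ _

lemma rpow_half_sub_succ {x : ℝ} (hx : 0 < x) (n : ℕ) :
    x ^ ((1 : ℝ) / 2 - (n + 1 : ℕ)) = (√x)⁻¹ * x⁻¹ ^ n := by
  have h : (1 : ℝ) / 2 - (n + 1 : ℕ) = -(1 / 2) + -n := by push_cast; ring
  rw [h, rpow_add hx, rpow_neg hx.le, rpow_neg hx.le, rpow_natCast, sqrt_eq_rpow, inv_pow]

lemma det_of_mul_vandermonde {R : Type*} [CommRing R] {p : ℕ} (c d v : Fin p → R) :
    (Matrix.of fun j i : Fin p => c j * (d i * v i ^ (j : ℕ))).det =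
      (∏ j, c j) * ((∏ i, d i) * ∏ i, ∏ j ∈ Ioi i, (v j - v i)) := by
  rw [← det_vandermonde, ← det_transpose (vandermonde v), ← det_mul_row d]
  exact det_mul_column c _

lemma Fin.sum_card_Ioi (p : ℕ) : ∑ i : Fin p, #(Ioi i) = p.choose 2 := by
  simp_rw [Fin.card_Ioi]
  rw [Fin.sum_univ_eq_sum_range (fun i => p - 1 - i), sum_range_reflect (fun i => i) p,
    sum_range_id, Nat.choose_two_right]

lemma Nat.sq_eq_add_two_mul_choose_two (p : ℕ) : p ^ 2 = p + 2 * p.choose 2 := by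
  induction p with
  | zero => rfl
  | succ n ih => rw [Nat.choose_succ_succ', Nat.choose_one_right]; nlinarith

lemma pow_choose_two_le_abs_prod_Ioi_sub {p : ℕ} {δ : ℝ} {v : Fin p → ℝ} (hδ : 0 ≤ δ)
    (hv : ∀ i j, i < j → δ ≤ |v j - v i|) :
    δ ^ p.choose 2 ≤ |∏ i, ∏ j ∈ Ioi i, (v j - v i)| := by
  rw [← Fin.sum_card_Ioi, ← prod_pow_eq_pow_sum, abs_prod]
  refine prod_le_prod (fun _ _ => by positivity) fun i _ => ?_
  rw [abs_prod, ← prod_const]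
  exact prod_le_prod (fun _ _ => hδ) fun j hj => hv i j (mem_Ioi.1 hj)

lemma inv_sq_le_abs_inv_sub_inv {x y M : ℝ} (hx : 0 < x) (hy : 0 < y) (hxM : x ≤ M)
    (hyM : y ≤ M) (hxy : 1 ≤ |x - y|) : (M ^ 2)⁻¹ ≤ |y⁻¹ - x⁻¹| := by
  have hxyM : x * y ≤ M ^ 2 := by nlinarith
  calc (M ^ 2)⁻¹ ≤ (x * y)⁻¹ := inv_anti₀ (by positivity) hxyM
    _ ≤ |x - y| * (x * y)⁻¹ := le_mul_of_one_le_left (by positivity) hxy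
    _ = |y⁻¹ - x⁻¹| := by
      rw [inv_sub_inv hy.ne' hx.ne', abs_div, abs_of_pos (mul_pos hy hx), mul_comm y x,
        div_eq_mul_inv, abs_sub_comm]

theorem le_abs_det_iteratedDeriv_sqrt_add {p : ℕ} {M m : ℝ} (q : Fin p → ℝ)
    (hq : ∀ i, 1 ≤ q i + m) (hqM : ∀ i, q i + m ≤ M)
    (hsep : ∀ i k, i ≠ k → 1 ≤ |q i - q k|) :
    (∏ j : Fin p, |(descPochhammer ℝ (j + 1)).eval (1 / 2)|) * (M ^ p ^ 2)⁻¹ ≤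
      |(Matrix.of fun j i : Fin p => iteratedDeriv (j + 1) (fun t => √(q i + t)) m).det| := by
  have hpos : ∀ i, 0 < q i + m := fun i => one_pos.trans_le (hq i)
  have hmat : (Matrix.of fun j i : Fin p => iteratedDeriv (j + 1) (fun t => √(q i + t)) m) =
      Matrix.of fun j i : Fin p => (descPochhammer ℝ (j + 1)).eval (1 / 2) *
        ((√(q i + m))⁻¹ * (q i + m)⁻¹ ^ (j : ℕ)) := by
    ext j i
    rw [of_apply, of_apply, iteratedDeriv_sqrt_const_add, rpow_half_sub_succ (hpos i)]
  have hsqrt : (M ^ p)⁻¹ ≤ ∏ i, |(√(q i + m))⁻¹| := by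
    calc (M ^ p)⁻¹ = ∏ _i : Fin p, M⁻¹ := by
          rw [prod_const, card_univ, Fintype.card_fin, inv_pow]
      _ ≤ _ := by
        refine prod_le_prod (fun i _ => inv_nonneg.2 (by linarith [hq i, hqM i])) fun i _ => ?_
        rw [abs_inv, abs_of_nonneg (sqrt_nonneg _)]
        exact inv_anti₀ (sqrt_pos.2 (hpos i))
          ((sqrt_le_self_iff.2 (Or.inr (hq i))).trans (hqM i))
  have hvdm : ((M ^ 2)⁻¹) ^ p.choose 2 ≤
      |∏ i, ∏ j ∈ Ioi i, ((q j + m)⁻¹ - (q i + m)⁻¹)| :=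
    pow_choose_two_le_abs_prod_Ioi_sub (by positivity) fun i j hij =>
      inv_sq_le_abs_inv_sub_inv (hpos i) (hpos j) (hqM i) (hqM j)
        (by rw [add_sub_add_right_eq_sub]; exact hsep i j hij.ne)
  rw [hmat, det_of_mul_vandermonde, abs_mul, abs_mul, abs_prod, abs_prod]
  calc _ = (∏ j : Fin p, |(descPochhammer ℝ (j + 1)).eval (1 / 2)|) *
        ((M ^ p)⁻¹ * ((M ^ 2)⁻¹) ^ p.choose 2) := by
        rw [Nat.sq_eq_add_two_mul_choose_two p, pow_add, pow_mul, mul_inv, inv_pow]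
    _ ≤ _ := by gcongr

theorem stmt_1_general (p : ℕ) :
    ∃ C : ℝ, 0 < C ∧
      ∀ (N : ℕ), 1 ≤ N →
      ∀ (A : Finset ℤ), (∀ j ∈ A, j ≠ 0 → -j ∉ A) →
        (∀ x ∈ A, |x| ≤ (N : ℤ)) →
      ∀ (a : Fin p → ℤ), Function.Injective a → (∀ i, a i ∈ A) →
      ∀ m ∈ Set.Icc (1:ℝ) 2,
        C * ((N : ℝ) ^ (2 * p^2))⁻¹ ≤
          |(Matrix.of fun (j i : Fin p) =>
              iteratedDeriv (j.1 + 1) (fun t : ℝ => Real.sqrt ((a i : ℝ)^2 + t)) m).det| := by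
  have half_ne_natCast : ∀ k : ℕ, (1 / 2 : ℝ) ≠ k := fun k h => by
    have : (1 : ℝ) = 2 * k := by linarith [h]
    norm_cast at this
    omega
  set c : ℝ := ∏ j : Fin p, |(descPochhammer ℝ (j + 1)).eval (1 / 2)|
  refine ⟨c / 3 ^ p ^ 2,
    div_pos (prod_pos fun j _ => abs_pos.2 (descPochhammer_eval_ne_zero half_ne_natCast _))
      (by positivity), ?_⟩
  intro N hN A hA hAN a ha haA m ⟨hm1, hm2⟩
  have hN1 : (1 : ℝ) ≤ N := by exact_mod_cast hN
  have haN : ∀ i, (a i : ℝ) ^ 2 ≤ N ^ 2 := fun i => by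
    have h : |(a i : ℝ)| ≤ N := by exact_mod_cast hAN _ (haA i)
    nlinarith [abs_le.1 h]
  have hsep : ∀ i k, i ≠ k → 1 ≤ |(a i : ℝ) ^ 2 - (a k : ℝ) ^ 2| := fun i k hik => by
    exact_mod_cast Int.one_le_abs
      (sub_ne_zero.2 (Admissible.sq_ne_sq (A := A) hA (haA i) (haA k) (ha.ne hik)))
  calc c / 3 ^ p ^ 2 * ((N : ℝ) ^ (2 * p ^ 2))⁻¹ = c * ((3 * (N : ℝ) ^ 2) ^ p ^ 2)⁻¹ := by
        rw [mul_pow, ← pow_mul, mul_inv, div_eq_mul_inv]; ring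
    _ ≤ _ := le_abs_det_iteratedDeriv_sqrt_add (fun i => (a i : ℝ) ^ 2)
        (fun i => by nlinarith [sq_nonneg (a i : ℝ)]) (fun i => by nlinarith [haN i]) hsep

/-- For every `p ≥ 1` there is `C = C(p) > 0` such that for every `N ≥ 1`,
every admissible set `𝒜 ⊂ ℤ` contained in `[-N,N]`, every `p` pairwise distinct elements
`a 1, …, a p` of `𝒜` and every `m ∈ [1,2]`, the `p × p` determinant whose `(j,i)` entry
is the `j`-th derivative at `m` of `t ↦ √((a i)² + t)` has absolute value at least
`C N^(-2p²)`. -/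
theorem stmt_1 (p : ℕ) (hp : 1 ≤ p) :
    ∃ C : ℝ, 0 < C ∧
      ∀ (N : ℕ), 1 ≤ N →
      ∀ (A : Finset ℤ), (∀ j ∈ A, j ≠ 0 → -j ∉ A) →
        (∀ x ∈ A, |x| ≤ (N : ℤ)) →
      ∀ (a : Fin p → ℤ), Function.Injective a → (∀ i, a i ∈ A) →
      ∀ m ∈ Set.Icc (1:ℝ) 2,
        C * ((N : ℝ) ^ (2 * p^2))⁻¹ ≤
          |(Matrix.of fun (j i : Fin p) =>
              iteratedDeriv (j.1 + 1) (fun t : ℝ => Real.sqrt ((a i : ℝ)^2 + t)) m).det| :=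
  stmt_1_general p
end

section
/- Let 1 ≤ p ≤ n, let u^{(1)}, …, u^{(p)} be linearly independent vectors of ℝⁿ satisfying ‖u^{(j)}‖_{ℓ¹} ≤ K for all j ∈ {1,…,p}, and let w be a linear combination of u^{(1)}, …, u^{(p)}. Then there exists j ∈ {1,…,p} such that |u^{(j)} · w| ≥ ‖w‖_{ℓ²} · 𝒱_p(u^{(1)},…,u^{(p)}) / (p K^{p−1}). -/
/-!
Write `w = ∑ i, c i • u i`. Replacing `u j` by `w` multiplies the Gram determinant by `c j ^ 2`,
and Hadamard's inequality `det (gram u) ≤ ∏ i, ‖u i‖ ^ 2` (read off the Gram–Schmidt factorisation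
of the Gram matrix) bounds the new determinant by `‖w‖ ^ 2 K ^ (2 (p - 1))`, since `‖·‖₂ ≤ ‖·‖₁`.
Hence `|c j| 𝒱 ≤ ‖w‖ K ^ (p - 1)`, and for `j` maximising `|⟪u j, w⟫|`,
`‖w‖ ^ 2 𝒱 = ∑ i, c i 𝒱 ⟪u i, w⟫ ≤ p ‖w‖ K ^ (p - 1) |⟪u j, w⟫|`.
-/

open scoped RealInnerProductSpace
open Matrix InnerProductSpace Finset

section Gram

variable {𝕜 E : Type*} [RCLike 𝕜] [NormedAddCommGroup E] [InnerProductSpace 𝕜 E]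
  {ι κ : Type*} [Fintype ι]

theorem Matrix.gram_sum_smul (f : ι → E) (A : Matrix ι κ 𝕜) :
    gram 𝕜 (fun k ↦ ∑ i, A i k • f i) = Aᴴ * gram 𝕜 f * A := by
  ext a b
  simp only [gram_apply, sum_inner, inner_sum, inner_smul_left, inner_smul_right, mul_apply,
    conjTranspose_apply, RCLike.star_def, sum_mul, mul_sum]
  exact sum_congr rfl fun _ _ ↦ sum_congr rfl fun _ _ ↦ by ring

end Gram

section GramSchmidt

variable {E : Type*} [NormedAddCommGroup E] [InnerProductSpace ℝ E]
  {ι : Type*} [LinearOrder ι] [LocallyFiniteOrderBot ι] [WellFoundedLT ι]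

-- The diagonal is set to `1` by hand: the quotient would be `0` where `gramSchmidt ℝ f k = 0`.
noncomputable def gramSchmidtCoeff (f : ι → E) : Matrix ι ι ℝ :=
  of fun i k ↦ if i = k then 1 else ⟪gramSchmidt ℝ f i, f k⟫ / ‖gramSchmidt ℝ f i‖ ^ 2

theorem gramSchmidtCoeff_isUpperTriangular (f : ι → E) :
    (gramSchmidtCoeff f).IsUpperTriangular := by
  intro i k (hki : k < i)
  simp [gramSchmidtCoeff, hki.ne', gramSchmidt_inv_triangular ℝ f hki]

theorem sum_gramSchmidtCoeff_smul [Fintype ι] (f : ι → E) (k : ι) :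
    ∑ i, gramSchmidtCoeff f i k • gramSchmidt ℝ f i = f k := by
  have hlater : ∀ i ∈ univ.erase k, i ∉ Iio k →
      gramSchmidtCoeff f i k • gramSchmidt ℝ f i = 0 := by
    intro i hi hik
    have hki : k < i := lt_of_le_of_ne (by simpa using hik) (ne_of_mem_erase hi).symm
    simp [gramSchmidtCoeff, hki.ne', gramSchmidt_inv_triangular ℝ f hki]
  conv_rhs => rw [gramSchmidt_def'' ℝ f k]
  rw [← add_sum_erase _ _ (mem_univ k),
    ← sum_subset (fun i hi ↦ by simpa using (mem_Iio.1 hi).ne) hlater]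
  congr 1
  · simp [gramSchmidtCoeff]
  · exact sum_congr rfl fun i hi ↦ by simp [gramSchmidtCoeff, (mem_Iio.1 hi).ne]

theorem gram_gramSchmidt [Fintype ι] [DecidableEq ι] (f : ι → E) :
    gram ℝ (gramSchmidt ℝ f) = diagonal fun i ↦ ‖gramSchmidt ℝ f i‖ ^ 2 := by
  ext i k
  rcases eq_or_ne i k with rfl | hik
  · simp [gram_apply]
  · simp [gram_apply, hik, gramSchmidt_orthogonal ℝ f hik]

theorem Matrix.det_gram_eq_prod_norm_gramSchmidt_sq [Fintype ι] [DecidableEq ι] (f : ι → E) :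
    (gram ℝ f).det = ∏ i, ‖gramSchmidt ℝ f i‖ ^ 2 := by
  have hf : gram ℝ f = (gramSchmidtCoeff f)ᴴ * diagonal (fun i ↦ ‖gramSchmidt ℝ f i‖ ^ 2) *
      gramSchmidtCoeff f := by
    conv_lhs => rw [← funext (sum_gramSchmidtCoeff_smul f)]
    rw [gram_sum_smul, gram_gramSchmidt]
  have hC : (gramSchmidtCoeff f).det = 1 := by
    rw [det_of_isUpperTriangular (gramSchmidtCoeff_isUpperTriangular f)]
    simp [gramSchmidtCoeff]
  rw [hf, det_mul, det_mul, det_conjTranspose, hC, det_diagonal]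
  simp

theorem inner_gramSchmidt_self (f : ι → E) (i : ι) :
    ⟪gramSchmidt ℝ f i, f i⟫ = ‖gramSchmidt ℝ f i‖ ^ 2 := by
  conv_lhs => rw [gramSchmidt_def'' ℝ f i]
  rw [inner_add_right, inner_sum, sum_eq_zero fun j hj ↦ ?_, add_zero,
    real_inner_self_eq_norm_sq]
  rw [real_inner_smul_right, gramSchmidt_orthogonal ℝ f (mem_Iio.1 hj).ne', mul_zero]

theorem norm_gramSchmidt_le (f : ι → E) (i : ι) : ‖gramSchmidt ℝ f i‖ ≤ ‖f i‖ := by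
  have h := real_inner_le_norm (gramSchmidt ℝ f i) (f i)
  rw [inner_gramSchmidt_self, sq] at h
  rcases (norm_nonneg (gramSchmidt ℝ f i)).eq_or_lt with h0 | hpos
  · exact h0 ▸ norm_nonneg _
  · exact le_of_mul_le_mul_left h hpos

end GramSchmidt

section Hadamard

variable {E : Type*} [NormedAddCommGroup E] [InnerProductSpace ℝ E] {ι : Type*} [Fintype ι]
  [DecidableEq ι]

theorem Matrix.det_gram_update_sum_smul (f : ι → E) (c : ι → ℝ) (j : ι) :
    (gram ℝ (Function.update f j (∑ i, c i • f i))).det = c j ^ 2 * (gram ℝ f).det := by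
  set A : Matrix ι ι ℝ := (1 : Matrix ι ι ℝ).updateCol j c
  have hA : Function.update f j (∑ i, c i • f i) = fun k ↦ ∑ i, A i k • f i := by
    funext k
    rcases eq_or_ne k j with rfl | hk
    · simp [A]
    · simp [A, hk, one_apply]
  have hdetA : A.det = c j := by
    simpa [A, one_apply] using det_updateCol_sum (1 : Matrix ι ι ℝ) j c
  rw [hA, gram_sum_smul, det_mul, det_mul, det_conjTranspose, hdetA]
  simp only [star_trivial]
  ring

theorem Matrix.det_gram_le_prod_norm_sq (f : ι → E) : (gram ℝ f).det ≤ ∏ i, ‖f i‖ ^ 2 := by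
  let e := Fintype.equivFin ι
  have he : (gram ℝ f).det = (gram ℝ (f ∘ e.symm)).det :=
    (det_submatrix_equiv_self e.symm (gram ℝ f)).symm
  rw [he, det_gram_eq_prod_norm_gramSchmidt_sq, ← e.symm.prod_comp]
  exact prod_le_prod (fun _ _ ↦ by positivity) fun i _ ↦
    pow_le_pow_left₀ (norm_nonneg _) (norm_gramSchmidt_le _ i) 2

theorem abs_mul_sqrt_det_gram_le (f : ι → E) (c : ι → ℝ) (j : ι) :
    |c j| * √(gram ℝ f).det ≤ ‖∑ i, c i • f i‖ * ∏ i ∈ univ.erase j, ‖f i‖ := by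
  have hsq : (|c j| * √(gram ℝ f).det) ^ 2 ≤
      (‖∑ i, c i • f i‖ * ∏ i ∈ univ.erase j, ‖f i‖) ^ 2 := by
    rw [mul_pow, sq_abs, Real.sq_sqrt (posSemidef_gram ℝ f).det_nonneg,
      ← det_gram_update_sum_smul, mul_pow, ← prod_pow]
    refine (det_gram_le_prod_norm_sq _).trans_eq ?_
    rw [← mul_prod_erase _ _ (mem_univ j), Function.update_self]
    congr 1
    exact prod_congr rfl fun i hi ↦ by rw [Function.update_of_ne (ne_of_mem_erase hi)]
  exact le_of_pow_le_pow_left₀ two_ne_zero (by positivity) hsq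

theorem exists_norm_mul_sqrt_det_gram_le [Nonempty ι] {f : ι → E} {K : ℝ}
    (hK : ∀ i, ‖f i‖ ≤ K) {w : E} (hw : w ∈ Submodule.span ℝ (Set.range f)) :
    ∃ j, ‖w‖ * √(gram ℝ f).det ≤ Fintype.card ι * K ^ (Fintype.card ι - 1) * |⟪f j, w⟫| := by
  obtain ⟨c, hc⟩ := (Submodule.mem_span_range_iff_exists_fun ℝ).1 hw
  obtain ⟨j, hj⟩ := Finite.exists_max fun i ↦ |⟪f i, w⟫|
  have hK0 : 0 ≤ K := (norm_nonneg _).trans (hK (Classical.arbitrary ι))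
  have hcoeff (i : ι) : |c i| * √(gram ℝ f).det ≤ ‖w‖ * K ^ (Fintype.card ι - 1) := by
    refine (abs_mul_sqrt_det_gram_le f c i).trans ?_
    rw [hc, ← card_univ, ← card_erase_of_mem (mem_univ i), ← prod_const]
    exact mul_le_mul_of_nonneg_left (prod_le_prod (fun _ _ ↦ norm_nonneg _) fun k _ ↦ hK k)
      (norm_nonneg _)
  have hnorm : ‖w‖ ^ 2 = ∑ i, c i * ⟪f i, w⟫ := by
    rw [← real_inner_self_eq_norm_sq]
    nth_rewrite 1 [← hc]
    simp only [sum_inner, real_inner_smul_left]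
  refine ⟨j, ?_⟩
  have hmul : ‖w‖ * (‖w‖ * √(gram ℝ f).det) ≤
      ‖w‖ * (Fintype.card ι * K ^ (Fintype.card ι - 1) * |⟪f j, w⟫|) :=
    calc ‖w‖ * (‖w‖ * √(gram ℝ f).det) = ∑ i, c i * √(gram ℝ f).det * ⟪f i, w⟫ := by
          rw [← mul_assoc, ← sq, hnorm, sum_mul]
          exact sum_congr rfl fun _ _ ↦ by ring
      _ ≤ ∑ _i : ι, ‖w‖ * K ^ (Fintype.card ι - 1) * |⟪f j, w⟫| := by
          refine sum_le_sum fun i _ ↦ (le_abs_self _).trans ?_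
          rw [abs_mul, abs_mul, abs_of_nonneg (Real.sqrt_nonneg _)]
          exact mul_le_mul (hcoeff i) (hj i) (abs_nonneg _)
            (mul_nonneg (norm_nonneg _) (pow_nonneg hK0 _))
      _ = ‖w‖ * (Fintype.card ι * K ^ (Fintype.card ι - 1) * |⟪f j, w⟫|) := by
          rw [sum_const, card_univ, nsmul_eq_mul]
          ring
  rcases (norm_nonneg w).eq_or_lt with h0 | hpos
  · rw [← h0, zero_mul]
    positivity
  · exact le_of_mul_le_mul_left hmul hpos

end Hadamard

theorem EuclideanSpace.norm_le_sum_abs {ι : Type*} [Fintype ι] (x : EuclideanSpace ℝ ι) :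
    ‖x‖ ≤ ∑ i, |x i| := by
  classical
  calc ‖x‖ = ‖∑ i, x i • EuclideanSpace.single i (1 : ℝ)‖ := by
        congr 1
        ext i
        simp [Pi.single_apply]
    _ ≤ ∑ i, ‖x i • EuclideanSpace.single i (1 : ℝ)‖ := norm_sum_le _ _
    _ = ∑ i, |x i| := by simp [norm_smul]

theorem stmt_2_general (n p : ℕ) (hp : 1 ≤ p)
    (u : Fin p → EuclideanSpace ℝ (Fin n))
    (K : ℝ) (hK : 0 < K)
    (hu_l1 : ∀ j, ∑ i, |u j i| ≤ K)
    (w : EuclideanSpace ℝ (Fin n))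
    (hw : w ∈ Submodule.span ℝ (Set.range u)) :
    ∃ j : Fin p,
      ‖w‖ * Real.sqrt ((Matrix.of fun i j : Fin p => ⟪u i, u j⟫).det)
          / (p * K ^ (p - 1))
        ≤ |⟪u j, w⟫| := by
  have : Nonempty (Fin p) := ⟨⟨0, hp⟩⟩
  obtain ⟨j, hj⟩ := exists_norm_mul_sqrt_det_gram_le
    (fun i ↦ (EuclideanSpace.norm_le_sum_abs (u i)).trans (hu_l1 i)) hw
  rw [Fintype.card_fin] at hj
  exact ⟨j, div_le_of_le_mul₀ (by positivity) (abs_nonneg _) (hj.trans_eq (mul_comm _ _))⟩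

/-- If `u 1, …, u p` are linearly independent vectors of `ℝⁿ` with
`ℓ¹`-norm at most `K`, and `w` is a linear combination of them, then for some `j`,
`|u j ⬝ w| ≥ ‖w‖₂ · 𝒱_p(u) / (p K^(p-1))`, where `𝒱_p(u)` is the Euclidean volume of the
parallelepiped generated by the `u j`, i.e. the square root of the Gram determinant. -/
theorem stmt_2 (n p : ℕ) (hp : 1 ≤ p) (hpn : p ≤ n)
    (u : Fin p → EuclideanSpace ℝ (Fin n))
    (hu_ind : LinearIndependent ℝ u)
    (K : ℝ) (hK : 0 < K)
    (hu_l1 : ∀ j, ∑ i, |u j i| ≤ K)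
    (w : EuclideanSpace ℝ (Fin n))
    (hw : w ∈ Submodule.span ℝ (Set.range u)) :
    ∃ j : Fin p,
      ‖w‖ * Real.sqrt ((Matrix.of fun i j : Fin p => ⟪u i, u j⟫).det)
          / (p * K ^ (p - 1))
        ≤ |⟪u j, w⟫| :=
  stmt_2_general n p hp u K hK hu_l1 w hw
end

section
/- For every integer n ≥ 1 there exists a constant C > 0 depending only on n with the following property. Let N ≥ 1 be an integer, let 𝒜 ⊂ ℤ be an admissible set with card 𝒜 = n and |a| ≤ N for all a ∈ 𝒜, let m ∈ [1,2], and let w ∈ ℝ^𝒜 be a nonzero vector. Then there exists j ∈ {1,…,n} such that |∑_{a∈𝒜} w_a · (d^j ω_a / dm^j)(m)| ≥ C N^{−2n²} ‖w‖_{ℓ¹}, where ω_a(m) = √(a² + m) and ‖w‖_{ℓ¹} = ∑_{a∈𝒜} |w_a|. -/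
set_option maxHeartbeats 1000000

noncomputable def dcoef (j : ℕ) : ℝ := ∏ i ∈ Finset.range j, ((1:ℝ)/2 - i)

lemma dcoef_ne_zero (j : ℕ) : dcoef j ≠ 0 := by
  unfold dcoef
  rw [Finset.prod_ne_zero_iff]
  intro i _
  rcases Nat.eq_zero_or_pos i with h | h
  · subst h; norm_num
  · have : (1:ℝ) ≤ i := by exact_mod_cast h
    intro hc; rw [sub_eq_zero] at hc; linarith

lemma abs_dcoef_le (j : ℕ) : |dcoef j| ≤ j.factorial := by
  induction j with
  | zero => simp [dcoef]
  | succ j ih =>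
      rw [dcoef, Finset.prod_range_succ, ← dcoef, abs_mul]
      have h1 : |(1:ℝ)/2 - j| ≤ j + 1 := by
        rw [abs_sub_le_iff]
        constructor <;>
          · have : (0:ℝ) ≤ j := Nat.cast_nonneg j
            linarith
      calc |dcoef j| * |(1:ℝ)/2 - j| ≤ (j.factorial : ℝ) * (j+1) :=
            mul_le_mul ih h1 (abs_nonneg _) (Nat.cast_nonneg _)
        _ = ((j+1).factorial : ℝ) := by rw [Nat.factorial_succ]; push_cast; ring

lemma iter_deriv_rpow (c : ℝ) (j : ℕ) :
    ∀ t : ℝ, 0 < c + t →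
      iteratedDeriv j (fun s : ℝ => (c + s) ^ ((1:ℝ)/2)) t
        = dcoef j * (c + t) ^ ((1:ℝ)/2 - j) := by
  induction j with
  | zero => intro t ht; simp [dcoef]
  | succ j ih =>
      intro t ht
      rw [iteratedDeriv_succ]
      have hopen : IsOpen {s : ℝ | 0 < c + s} := isOpen_lt continuous_const (by continuity)
      have hmem : {s : ℝ | 0 < c + s} ∈ nhds t := hopen.mem_nhds ht
      have hev : iteratedDeriv j (fun s : ℝ => (c + s) ^ ((1:ℝ)/2))
          =ᶠ[nhds t] fun s => dcoef j * (c + s) ^ ((1:ℝ)/2 - (j:ℕ)) :=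
        Filter.eventuallyEq_of_mem hmem (fun s hs => ih s hs)
      rw [hev.deriv_eq]
      have h1 : HasDerivAt (fun s : ℝ => c + s) 1 t := by
        simpa using (hasDerivAt_id t).const_add c
      have h2 := (h1.rpow_const (p := (1:ℝ)/2 - (j:ℕ)) (Or.inl (ne_of_gt ht))).const_mul (dcoef j)
      rw [h2.deriv]
      have hc : dcoef (j+1) = dcoef j * ((1:ℝ)/2 - j) := by
        rw [dcoef, Finset.prod_range_succ, ← dcoef]
      have hexp : (1:ℝ)/2 - (j:ℕ) - 1 = (1:ℝ)/2 - ((j:ℕ)+1:ℕ) := by push_cast; ring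
      rw [hexp] at *
      rw [hc]; push_cast; ring

lemma iter_deriv_sqrt (c : ℝ) (j : ℕ) (t : ℝ) (ht : 0 < c + t) :
    iteratedDeriv j (fun s : ℝ => Real.sqrt (c + s)) t
      = dcoef j * (c + t) ^ ((1:ℝ)/2 - j) := by
  have : (fun s : ℝ => Real.sqrt (c + s)) = fun s : ℝ => (c + s) ^ ((1:ℝ)/2) := by
    funext s; exact Real.sqrt_eq_rpow _
  rw [this]; exact iter_deriv_rpow c j t ht

lemma abs_det_le {n : ℕ} (A : Matrix (Fin n) (Fin n) ℝ) (E : ℝ)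
    (h : ∀ i j, |A i j| ≤ E) : |A.det| ≤ (n.factorial : ℝ) * E ^ n := by
  rw [Matrix.det_apply']
  calc |∑ σ : Equiv.Perm (Fin n), Equiv.Perm.sign σ * ∏ i, A (σ i) i|
      ≤ ∑ σ : Equiv.Perm (Fin n), |(Equiv.Perm.sign σ : ℝ) * ∏ i, A (σ i) i| :=
        Finset.abs_sum_le_sum_abs _ _
    _ ≤ ∑ _σ : Equiv.Perm (Fin n), E ^ n := by
        refine Finset.sum_le_sum fun σ _ => ?_
        rw [abs_mul]
        have h1 : |((Equiv.Perm.sign σ : ℤ) : ℝ)| = 1 := by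
          rcases Int.units_eq_one_or (Equiv.Perm.sign σ) with h | h <;> simp [h]
        rw [h1, one_mul, Finset.abs_prod]
        calc ∏ i, |A (σ i) i| ≤ ∏ _i : Fin n, E :=
              Finset.prod_le_prod (fun _ _ => abs_nonneg _) (fun i _ => h _ _)
          _ = E ^ n := by simp
    _ = (n.factorial : ℝ) * E ^ n := by
        simp [Finset.card_univ, Fintype.card_perm]

/-- For every `n ≥ 1` there is `C > 0` depending only on `n` such that:
for every `N ≥ 1`, every admissible set `𝒜 ⊂ ℤ` of cardinality `n` contained in `[-N,N]`,
every `m ∈ [1,2]` and every nonzero `w ∈ ℝ^𝒜`, there is `j ∈ {1,…,n}` with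
`|∑_{a∈𝒜} w_a (d^j ω_a/dm^j)(m)| ≥ C N^(-2n²) ‖w‖_{ℓ¹}`, where `ω_a(m) = √(a² + m)`. -/
theorem stmt_3 (n : ℕ) (hn : 1 ≤ n) :
    ∃ C : ℝ, 0 < C ∧
      ∀ (N : ℕ), 1 ≤ N →
      ∀ (A : Finset ℤ), (∀ j ∈ A, j ≠ 0 → -j ∉ A) → A.card = n →
        (∀ a ∈ A, |a| ≤ (N : ℤ)) →
      ∀ m ∈ Set.Icc (1:ℝ) 2,
      ∀ (w : ℤ → ℝ), (∃ a ∈ A, w a ≠ 0) →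
        ∃ j ∈ Finset.Icc 1 n,
          C * ((N : ℝ) ^ (2 * n^2))⁻¹ * (∑ a ∈ A, |w a|) ≤
            |∑ a ∈ A, w a * iteratedDeriv j (fun t : ℝ => Real.sqrt ((a : ℝ)^2 + t)) m| := by
  classical
  -- constants
  set E : ℝ := (n.factorial : ℝ) with hE
  have hE1 : (1:ℝ) ≤ E := Nat.one_le_cast.mpr n.factorial_pos
  set B : ℝ := E * E ^ n with hBdef
  have hBpos : 0 < B := by positivity
  set P : ℝ := ∏ j ∈ Finset.range n, |dcoef (j+1)| with hPdef
  have hPpos : 0 < P :=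
    Finset.prod_pos fun j _ => abs_pos.mpr (dcoef_ne_zero _)
  set G : ℝ := P * ((3:ℝ)^(n^2))⁻¹ with hGdef
  have hGpos : 0 < G := by positivity
  set C : ℝ := G / ((n:ℝ)^2 * B + 1) with hCdef
  have hden : (0:ℝ) < (n:ℝ)^2 * B + 1 := by positivity
  have hCpos : 0 < C := div_pos hGpos hden
  refine ⟨C, hCpos, ?_⟩
  intro N hN A hadm hcard hbound m hm w hw
  obtain ⟨hm1, hm2⟩ := hm
  by_contra hcon
  push_neg at hcon
  -- setup
  set e : {a // a ∈ A} ≃ Fin n := A.equivFinOfCardEq hcard with he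
  set g : Fin n → ℤ := fun i => (e.symm i : ℤ) with hg
  have hgA : ∀ i, g i ∈ A := fun i => (e.symm i).2
  have hginj : Function.Injective g := fun i j h =>
    e.symm.injective (Subtype.ext h)
  have hsq : ∀ i j : Fin n, i ≠ j → (g i)^2 ≠ (g j)^2 := by
    intro i j hij hsq
    have hne : g i ≠ g j := fun h => hij (hginj h)
    rcases sq_eq_sq_iff_eq_or_eq_neg.mp hsq with h | h
    · exact hne h
    · have hj0 : g j ≠ 0 := by
        intro h0; rw [h0, neg_zero] at h; exact hne (h.trans h0.symm)
      exact hadm (g j) (hgA j) hj0 (h ▸ hgA i)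
  have hsum : ∀ f : ℤ → ℝ, ∑ i : Fin n, f (g i) = ∑ a ∈ A, f a := by
    intro f
    rw [← Finset.sum_coe_sort A f]
    exact Equiv.sum_comp e.symm (fun a => f (a : ℤ))
  set x : Fin n → ℝ := fun i => ((g i : ℝ))^2 + m with hx
  have hx1 : ∀ i, 1 ≤ x i := by
    intro i
    have : (0:ℝ) ≤ (g i:ℝ)^2 := sq_nonneg _
    simp only [hx]; linarith
  have hx0 : ∀ i, 0 < x i := fun i => lt_of_lt_of_le one_pos (hx1 i)
  have hN1 : (1:ℝ) ≤ (N:ℝ) := by exact_mod_cast hN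
  have hxN : ∀ i, x i ≤ 3 * (N:ℝ)^2 := by
    intro i
    have h1 : |(g i : ℝ)| ≤ (N:ℝ) := by
      have := hbound _ (hgA i)
      exact_mod_cast (by exact_mod_cast this : (|g i| : ℝ) ≤ (N:ℝ))
    have h2 : (g i:ℝ)^2 ≤ (N:ℝ)^2 := by
      rw [← sq_abs]; exact pow_le_pow_left₀ (abs_nonneg _) h1 2
    simp only [hx]; nlinarith
  have hgap : ∀ i j : Fin n, i ≠ j → 1 ≤ |x i - x j| := by
    intro i j hij
    have hxe : x i - x j = (((g i)^2 - (g j)^2 : ℤ) : ℝ) := by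
      simp only [hx]; push_cast; ring
    rw [hxe]
    have hne : ((g i)^2 - (g j)^2 : ℤ) ≠ 0 := sub_ne_zero.mpr (hsq i j hij)
    have h1 : 1 ≤ |((g i)^2 - (g j)^2 : ℤ)| := Int.one_le_abs hne
    calc (1:ℝ) = ((1:ℤ):ℝ) := by norm_num
      _ ≤ (|((g i)^2 - (g j)^2 : ℤ)| : ℝ) := by exact_mod_cast h1
      _ = |(((g i)^2 - (g j)^2 : ℤ):ℝ)| := by push_cast; ring_nf
  -- β and bounds
  set β : ℝ := (3 * (N:ℝ)^2)⁻¹ with hβ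
  have h3N : (1:ℝ) ≤ 3 * (N:ℝ)^2 := by nlinarith
  have hβpos : 0 < β := by positivity
  have hβ1 : β ≤ 1 := by
    rw [hβ]; exact inv_le_one_of_one_le₀ h3N
  set y : Fin n → ℝ := fun i => (x i)⁻¹ with hy
  set u : Fin n → ℝ := fun i => x i ^ (-(1:ℝ)/2) with hu
  have hupos : ∀ i, 0 < u i := fun i => Real.rpow_pos_of_pos (hx0 i) _
  have hui : ∀ i, β ≤ u i := by
    intro i
    have h1 : x i ^ (-(1:ℝ)) ≤ x i ^ (-(1:ℝ)/2) :=
      Real.rpow_le_rpow_of_exponent_le (hx1 i) (by norm_num)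
    have h2 : x i ^ (-(1:ℝ)) = (x i)⁻¹ := Real.rpow_neg_one _
    have h3 : β ≤ (x i)⁻¹ := by
      rw [hβ]; exact inv_anti₀ (hx0 i) (hxN i)
    rw [hu]; rw [h2] at h1; linarith
  have hygap : ∀ i j : Fin n, i ≠ j → β^2 ≤ |y j - y i| := by
    intro i j hij
    have hxi := hx0 i; have hxj := hx0 j
    have hyd : y j - y i = (x i - x j) / (x i * x j) := by
      simp only [hy]; rw [inv_sub_inv (ne_of_gt hxj) (ne_of_gt hxi), mul_comm]
    rw [hyd, abs_div, abs_of_pos (mul_pos hxi hxj)]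
    have h1 : 1 ≤ |x i - x j| := hgap i j hij
    have h2 : x i * x j ≤ (3*(N:ℝ)^2) * (3*(N:ℝ)^2) :=
      mul_le_mul (hxN i) (hxN j) (le_of_lt hxj) (by positivity)
    calc β^2 = ((3*(N:ℝ)^2) * (3*(N:ℝ)^2))⁻¹ := by rw [hβ, inv_pow, sq]
      _ ≤ (x i * x j)⁻¹ := inv_anti₀ (mul_pos hxi hxj) h2
      _ = 1 / (x i * x j) := by rw [inv_eq_one_div]
      _ ≤ |x i - x j| / (x i * x j) := by gcongr
  -- matrices
  set M : Matrix (Fin n) (Fin n) ℝ :=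
    Matrix.of (fun j i : Fin n => dcoef ((j:ℕ)+1) * x i ^ ((1:ℝ)/2 - (((j:ℕ)+1:ℕ):ℝ))) with hM
  set V : Matrix (Fin n) (Fin n) ℝ := Matrix.of (fun j i : Fin n => y i ^ (j:ℕ)) with hV
  have hMV : ∀ j i : Fin n, M j i = dcoef ((j:ℕ)+1) * (u i * V j i) := by
    intro j i
    simp only [hM, hV, hu, hy, Matrix.of_apply]
    congr 1
    have hxi := hx0 i
    calc x i ^ ((1:ℝ)/2 - (((j:ℕ)+1:ℕ):ℝ))
        = x i ^ ((-(1:ℝ)/2) + (-1) * ((j:ℕ):ℝ)) := by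
          congr 1; push_cast; ring
      _ = x i ^ (-(1:ℝ)/2) * x i ^ ((-1:ℝ) * ((j:ℕ):ℝ)) := Real.rpow_add hxi _ _
      _ = x i ^ (-(1:ℝ)/2) * (x i ^ (-1:ℝ)) ^ ((j:ℕ):ℝ) := by
          rw [Real.rpow_mul (le_of_lt hxi)]
      _ = x i ^ (-(1:ℝ)/2) * ((x i)⁻¹) ^ (j:ℕ) := by
          rw [Real.rpow_neg_one, Real.rpow_natCast]
  have hdet1 : M.det = (∏ j : Fin n, dcoef ((j:ℕ)+1)) * ((∏ i : Fin n, u i) * V.det) := by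
    have e1 : M = Matrix.of (fun j i : Fin n =>
        dcoef ((j:ℕ)+1) * (Matrix.of (fun j i : Fin n => u i * V j i) j i)) := by
      ext j i; rw [hMV j i]; rfl
    rw [e1, Matrix.det_mul_column]
    congr 1
    exact Matrix.det_mul_row (fun i => u i) V
  have hVdet : V.det = ∏ i : Fin n, ∏ j ∈ Finset.Ioi i, (y j - y i) := by
    have hVt : Matrix.transpose V = Matrix.vandermonde y := by
      ext i j
      simp [hV, Matrix.vandermonde_apply, Matrix.transpose_apply]
    rw [← Matrix.det_transpose V, hVt, Matrix.det_vandermonde]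
  -- exponent counting
  have hKval : (∑ i : Fin n, (Finset.Ioi i).card) = ∑ k ∈ Finset.range n, k := by
    calc ∑ i : Fin n, (Finset.Ioi i).card = ∑ i : Fin n, (n - 1 - (i:ℕ)) := by
          refine Finset.sum_congr rfl fun i _ => ?_
          exact Fin.card_Ioi i
      _ = ∑ k ∈ Finset.range n, (n - 1 - k) := Fin.sum_univ_eq_sum_range _ n
      _ = ∑ k ∈ Finset.range n, k := Finset.sum_range_reflect (fun k => k) n
  have hexp : n + 2 * (∑ i : Fin n, (Finset.Ioi i).card) = n^2 := by
    have h2K : (∑ k ∈ Finset.range n, k) * 2 = n * (n-1) := Finset.sum_range_id_mul_two n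
    have h : n - 1 + 1 = n := Nat.succ_pred_eq_of_pos hn
    have : n * (n-1) + n = n^2 := by
      calc n * (n-1) + n = n * ((n-1) + 1) := (Nat.mul_succ n (n-1)).symm
        _ = n * n := by rw [h]
        _ = n ^ 2 := (sq n).symm
    omega
  -- determinant lower bound
  have hdetlow : P * β ^ (n^2) ≤ |M.det| := by
    have hPeq : |∏ j : Fin n, dcoef ((j:ℕ)+1)| = P := by
      rw [Finset.abs_prod, hPdef]
      exact Fin.prod_univ_eq_prod_range (fun j => |dcoef (j+1)|) n
    have huprod : β ^ n ≤ ∏ i : Fin n, u i := by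
      calc β ^ n = ∏ _i : Fin n, β := by simp [Finset.prod_const]
        _ ≤ ∏ i, u i := Finset.prod_le_prod (fun _ _ => le_of_lt hβpos) (fun i _ => hui i)
    have hVlow : β ^ (2 * (∑ i : Fin n, (Finset.Ioi i).card)) ≤ |V.det| := by
      rw [hVdet, Finset.abs_prod]
      have step : ∀ i : Fin n, (β^2) ^ (Finset.Ioi i).card ≤ |∏ j ∈ Finset.Ioi i, (y j - y i)| := by
        intro i
        rw [Finset.abs_prod]
        calc (β^2)^(Finset.Ioi i).card = ∏ _j ∈ Finset.Ioi i, β^2 := (Finset.prod_const _).symm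
          _ ≤ ∏ j ∈ Finset.Ioi i, |y j - y i| :=
              Finset.prod_le_prod (fun _ _ => by positivity)
                (fun j hj => hygap i j (ne_of_lt (Finset.mem_Ioi.mp hj)))
      calc β ^ (2 * (∑ i : Fin n, (Finset.Ioi i).card))
          = ∏ i : Fin n, (β^2)^((Finset.Ioi i).card) := by
            rw [Finset.prod_pow_eq_pow_sum, ← pow_mul]
        _ ≤ ∏ i : Fin n, |∏ j ∈ Finset.Ioi i, (y j - y i)| :=
            Finset.prod_le_prod (fun _ _ => by positivity) (fun i _ => step i)
    rw [hdet1, abs_mul, abs_mul, hPeq,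
        abs_of_nonneg (Finset.prod_nonneg (fun i (_ : i ∈ Finset.univ) => le_of_lt (hupos i)))]
    have hsplit : β ^ (n^2) = β^n * β^(2 * (∑ i : Fin n, (Finset.Ioi i).card)) := by
      rw [← hexp, pow_add]
    rw [hsplit]
    have hVd0 : (0:ℝ) ≤ β ^ (2 * (∑ i : Fin n, (Finset.Ioi i).card)) := by positivity
    exact mul_le_mul_of_nonneg_left
      (mul_le_mul huprod hVlow hVd0 (Finset.prod_nonneg (fun i _ => le_of_lt (hupos i))))
      (le_of_lt hPpos)
  -- vector and sums
  have hFinNE : Nonempty (Fin n) := ⟨⟨0, hn⟩⟩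
  set v : Fin n → ℝ := fun i => w (g i) with hv
  set S : Fin n → ℝ := M.mulVec v with hS
  set L : ℝ := ∑ a ∈ A, |w a| with hL
  set Q : ℝ := ((N:ℝ) ^ (2 * n^2))⁻¹ with hQ
  have hQpos : 0 < Q := by positivity
  have hLpos : 0 < L := by
    obtain ⟨a0, ha0, hwa0⟩ := hw
    exact Finset.sum_pos' (fun a _ => abs_nonneg _) ⟨a0, ha0, abs_pos.mpr hwa0⟩
  have hSj : ∀ j : Fin n, |S j| < C * Q * L := by
    intro j
    have hmem : (j:ℕ)+1 ∈ Finset.Icc 1 n :=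
      Finset.mem_Icc.mpr ⟨Nat.le_add_left 1 _, Nat.succ_le_of_lt j.isLt⟩
    have hc := hcon ((j:ℕ)+1) hmem
    have hSeq : S j = ∑ a ∈ A, w a * iteratedDeriv ((j:ℕ)+1)
        (fun t : ℝ => Real.sqrt ((a : ℝ)^2 + t)) m := by
      have hterm : ∀ a ∈ A, w a * iteratedDeriv ((j:ℕ)+1)
          (fun t : ℝ => Real.sqrt ((a : ℝ)^2 + t)) m
          = w a * (dcoef ((j:ℕ)+1) * ((a:ℝ)^2 + m) ^ ((1:ℝ)/2 - (((j:ℕ)+1:ℕ):ℝ))) := by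
        intro a _
        rw [iter_deriv_sqrt ((a:ℝ)^2) ((j:ℕ)+1) m (by nlinarith [sq_nonneg ((a:ℝ))])]
      rw [Finset.sum_congr rfl hterm,
        ← hsum (fun a => w a * (dcoef ((j:ℕ)+1) * ((a:ℝ)^2 + m) ^ ((1:ℝ)/2 - (((j:ℕ)+1:ℕ):ℝ))))]
      simp only [hS, Matrix.mulVec, dotProduct, hM, Matrix.of_apply, hv, hx]
      exact Finset.sum_congr rfl (fun i _ => by ring)
    rw [hSeq]; exact hc
  -- entry and adjugate bounds
  have hMent : ∀ j i : Fin n, |M j i| ≤ E := by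
    intro j i
    simp only [hM, Matrix.of_apply]
    rw [abs_mul]
    have h1 : |dcoef ((j:ℕ)+1)| ≤ ((((j:ℕ)+1).factorial : ℕ) : ℝ) := abs_dcoef_le _
    have h2 : ((((j:ℕ)+1).factorial : ℕ) : ℝ) ≤ E := by
      rw [hE]; exact_mod_cast Nat.factorial_le (Nat.succ_le_of_lt j.isLt)
    have h3 : |x i ^ ((1:ℝ)/2 - (((j:ℕ)+1:ℕ):ℝ))| ≤ 1 := by
      rw [abs_of_nonneg (le_of_lt (Real.rpow_pos_of_pos (hx0 i) _))]
      apply Real.rpow_le_one_of_one_le_of_nonpos (hx1 i)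
      have hj1 : (1:ℝ) ≤ (((j:ℕ)+1:ℕ):ℝ) := by
        push_cast
        have : (0:ℝ) ≤ ((j:ℕ):ℝ) := Nat.cast_nonneg _
        linarith
      linarith
    have := mul_le_mul (h1.trans h2) h3 (abs_nonneg _) (le_trans zero_le_one hE1)
    linarith
  have hadjB : ∀ i j : Fin n, |M.adjugate i j| ≤ B := by
    intro i j
    rw [Matrix.adjugate_apply]
    have hent : ∀ r s, |(M.updateRow j (Pi.single i 1)) r s| ≤ E := by
      intro r s
      rw [Matrix.updateRow_apply]
      split
      · rcases eq_or_ne s i with h | h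
        · subst h; rw [Pi.single_eq_same]; simpa using hE1
        · rw [Pi.single_eq_of_ne h]; simpa using le_trans zero_le_one hE1
      · exact hMent r s
    exact abs_det_le (M.updateRow j (Pi.single i 1)) E hent
  -- Cramer identity
  have hkey : ∀ i, M.det * v i = ∑ j : Fin n, M.adjugate i j * S j := by
    intro i
    have h1 : (M.adjugate).mulVec S = M.det • v := by
      rw [hS, Matrix.mulVec_mulVec, Matrix.adjugate_mul, Matrix.smul_mulVec,
        Matrix.one_mulVec]
    have h2 := congrFun h1 i
    simp only [Matrix.mulVec, dotProduct, Pi.smul_apply, smul_eq_mul] at h2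
    rw [← h2]
  have hDv : ∀ i, |M.det| * |v i| ≤ ∑ j : Fin n, B * |S j| := by
    intro i
    rw [← abs_mul, hkey i]
    refine le_trans (Finset.abs_sum_le_sum_abs _ _) (Finset.sum_le_sum fun j _ => ?_)
    rw [abs_mul]
    exact mul_le_mul_of_nonneg_right (hadjB i j) (abs_nonneg _)
  have hsumv : ∑ i : Fin n, |v i| = L := hsum (fun a => |w a|)
  have hstrict : ∑ j : Fin n, B * |S j| < (n:ℝ) * (B * (C * Q * L)) := by
    have h := Finset.sum_lt_sum_of_nonempty (Finset.univ_nonempty (α := Fin n))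
      (fun j (_ : j ∈ Finset.univ) => mul_lt_mul_of_pos_left (hSj j) hBpos)
    simpa [Finset.sum_const, Finset.card_univ, nsmul_eq_mul] using h
  have hchain : |M.det| * L < (n:ℝ)^2 * B * (C * Q * L) := by
    calc |M.det| * L = ∑ i : Fin n, |M.det| * |v i| := by
          rw [← Finset.mul_sum, hsumv]
      _ ≤ ∑ i : Fin n, ∑ j : Fin n, B * |S j| := Finset.sum_le_sum (fun i _ => hDv i)
      _ < ∑ _i : Fin n, (n:ℝ) * (B * (C*Q*L)) :=
          Finset.sum_lt_sum_of_nonempty (Finset.univ_nonempty (α := Fin n))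
            (fun i _ => hstrict)
      _ = (n:ℝ)^2 * B * (C*Q*L) := by
          rw [Finset.sum_const, Finset.card_univ, Fintype.card_fin, nsmul_eq_mul]; ring
  have hβQ : β ^ (n^2) = ((3:ℝ)^(n^2))⁻¹ * Q := by
    rw [hβ, hQ, inv_pow, mul_pow, mul_inv, pow_mul]
  have hlow : G * (Q * L) ≤ |M.det| * L := by
    calc G * (Q*L) = P * β^(n^2) * L := by rw [hGdef, hβQ]; ring
      _ ≤ |M.det| * L := mul_le_mul_of_nonneg_right hdetlow (le_of_lt hLpos)
  have hCup : (n:ℝ)^2 * B * C < G := by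
    have h1 : C * ((n:ℝ)^2 * B + 1) = G := div_mul_cancel₀ G (ne_of_gt hden)
    nlinarith [hCpos]
  have hfin : G * (Q*L) < G * (Q*L) := by
    calc G * (Q*L) ≤ |M.det| * L := hlow
      _ < (n:ℝ)^2 * B * (C*Q*L) := hchain
      _ = ((n:ℝ)^2 * B * C) * (Q*L) := by ring
      _ < G * (Q*L) := mul_lt_mul_of_pos_right hCup (mul_pos hQpos hLpos)
  exact lt_irrefl _ hfin
end

section
/- Let p ≥ 1 be an integer, let J ⊂ ℝ be an interval, and let g : ℝ → ℝ be p-times differentiable on J with |g^{(p)}(τ)| ≥ d for all τ ∈ J, where d > 0. Then for every h > 0 the Lebesgue measure of the set J_h = { τ ∈ J : |g(τ)| < h } satisfies mes(J_h) ≤ M h^{1/p}, where M = 2(2 + 3 + ⋯ + p + d^{−1}) (the sum 2 + ⋯ + p being empty when p = 1). -/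
/-!
If `J_h` had measure larger than `p γ`, a greedy choice from the left would give `p + 1` points
of `J_h` with consecutive gaps at least `γ`. Applying Rolle's theorem `p` times to `g` minus its
interpolation polynomial at these nodes, the divided difference of `g` at them equals
`g⁽ᵖ⁾(ξ) / p!` for some `ξ ∈ J`, so it is at least `d / p!` in absolute value; each of its
`p + 1` terms, however, is at most `h / γ^p`. Hence `γ^p ≤ (p + 1)! h / d`, so
`mes J_h ≤ p ((p + 1)! h / d)^(1/p)`, and AM-GM applied to the factors `2/d, 4, 6, …, 2p`
bounds this by `M h^(1/p)`.
-/

open MeasureTheory Set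
open scoped Nat Topology ENNReal

namespace Polynomial

variable {𝕜 : Type*} [NontriviallyNormedField 𝕜]

theorem iteratedDeriv_eval (P : 𝕜[X]) (n : ℕ) :
    iteratedDeriv n (fun t => P.eval t) = fun t => (derivative^[n] P).eval t := by
  induction n generalizing P with
  | zero => rfl
  | succ n ih =>
    have hderiv : _root_.deriv (fun t => P.eval t) = fun t => P.derivative.eval t := by
      ext t; exact P.deriv
    rw [iteratedDeriv_succ', hderiv, ih, Function.iterate_succ_apply]

theorem iteratedDeriv_eval_of_natDegree_le {P : 𝕜[X]} {n : ℕ} (hP : P.natDegree ≤ n) (t : 𝕜) :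
    iteratedDeriv n (fun t => P.eval t) t = n ! * P.coeff n := by
  have hconst : (derivative^[n] P).natDegree = 0 :=
    Nat.eq_zero_of_le_zero ((natDegree_iterate_derivative P n).trans (by omega))
  rw [iteratedDeriv_eval]
  dsimp only
  rw [eq_C_of_natDegree_eq_zero hconst, eval_C, coeff_iterate_derivative,
    zero_add, Nat.descFactorial_self, nsmul_eq_mul]

end Polynomial

theorem iteratedDerivWithin_of_mem_nhds {𝕜 F : Type*} [NontriviallyNormedField 𝕜]
    [NormedAddCommGroup F] [NormedSpace 𝕜 F] {n : ℕ} {f : 𝕜 → F} {s : Set 𝕜} {x : 𝕜}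
    (hs : s ∈ 𝓝 x) :
    iteratedDerivWithin n f s x = iteratedDeriv n f x := by
  rw [iteratedDerivWithin, iteratedDeriv, ← iteratedFDerivWithin_univ,
    iteratedFDerivWithin_congr_set (Filter.eventuallyEq_univ.2 hs)]

theorem exists_iteratedDeriv_eq_zero {n : ℕ} (hn : 1 ≤ n) {f : ℝ → ℝ} {x : ℕ → ℝ}
    (hx : ∀ i < n, x i < x (i + 1)) (hf : ∀ i ≤ n, f (x i) = 0)
    (hfc : ContinuousOn f (Icc (x 0) (x n))) (hfd : ContDiffOn ℝ n f (Ioo (x 0) (x n))) :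
    ∃ ξ ∈ Ioo (x 0) (x n), iteratedDeriv n f ξ = 0 := by
  induction n, hn using Nat.le_induction generalizing f x with
  | base =>
    obtain ⟨ξ, hξ, hξ0⟩ :=
      exists_deriv_eq_zero (hx 0 one_pos) hfc (by rw [hf 0 zero_le_one, hf 1 le_rfl])
    exact ⟨ξ, hξ, by rwa [iteratedDeriv_one]⟩
  | succ n hn ih =>
    have hmono : MonotoneOn x (Iic (n + 1)) := (strictMonoOn_Iic_of_lt_succ hx).monotoneOn
    obtain ⟨c, hc, hc0⟩ : ∃ c : ℕ → ℝ,
        (∀ i ≤ n, c i ∈ Ioo (x i) (x (i + 1))) ∧ ∀ i ≤ n, deriv f (c i) = 0 := by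
      choose! c hc hc0 using fun i (hi : i ≤ n) => exists_deriv_eq_zero (hx i (by omega))
        (hfc.mono (Icc_subset_Icc (hmono (by simp) (by simp; omega) (Nat.zero_le i))
          (hmono (by simp; omega) (by simp) (by omega))))
        (by rw [hf i (by omega), hf (i + 1) (by omega)])
      exact ⟨c, hc, hc0⟩
    have hsub : Icc (c 0) (c n) ⊆ Ioo (x 0) (x (n + 1)) := fun y hy =>
      ⟨(hc 0 (Nat.zero_le n)).1.trans_le hy.1,
        hy.2.trans_lt ((hc n le_rfl).2.trans_le (hmono (by simp) (by simp) le_rfl))⟩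
    have hf' : ContDiffOn ℝ n (deriv f) (Ioo (x 0) (x (n + 1))) :=
      hfd.deriv_of_isOpen isOpen_Ioo (by norm_cast)
    obtain ⟨ξ, hξ, hξ0⟩ := ih (f := deriv f) (x := c)
      (fun i hi => (hc i hi.le).2.trans (hc (i + 1) hi).1) hc0
      (hf'.continuousOn.mono hsub) (hf'.mono (Ioo_subset_Icc_self.trans hsub))
    exact ⟨ξ, hsub (Ioo_subset_Icc_self hξ), by rwa [iteratedDeriv_succ']⟩

section DividedDifference

variable {ι F : Type*} [DecidableEq ι] [Field F]

def dividedDifference (s : Finset ι) (x r : ι → F) : F :=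
  ∑ i ∈ s, r i / ∏ j ∈ s.erase i, (x i - x j)

theorem Lagrange.coeff_card_sub_one_interpolate {s : Finset ι} {x : ι → F} (hx : InjOn x s)
    (r : ι → F) :
    (interpolate s x r).coeff (s.card - 1) = dividedDifference s x r := by
  rw [coeff_eq_sum hx (degree_interpolate_lt r hx), dividedDifference]
  refine Finset.sum_congr rfl fun i hi => ?_
  rw [eval_interpolate_at_node r hx hi]

end DividedDifference

theorem exists_iteratedDerivWithin_eq_factorial_mul_dividedDifference {k : ℕ} (hk : 1 ≤ k)
    {J : Set ℝ} {g : ℝ → ℝ} (hg : ContDiffOn ℝ k g J) {x : ℕ → ℝ}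
    (hx : ∀ i < k, x i < x (i + 1)) (hJ : Icc (x 0) (x k) ⊆ J) :
    ∃ ξ ∈ J, iteratedDerivWithin k g J ξ =
      k ! * dividedDifference (Finset.range (k + 1)) x (fun i => g (x i)) := by
  set s := Finset.range (k + 1)
  have hinj : InjOn x s := (strictMonoOn_Iic_of_lt_succ hx).injOn.mono fun i hi => by
    simpa [s, Nat.lt_succ_iff] using hi
  set P := Lagrange.interpolate s x (fun i => g (x i))
  have hcard : s.card - 1 = k := by simp [s]
  have hP : P.natDegree ≤ k :=
    hcard ▸ Polynomial.natDegree_le_of_degree_le (Lagrange.degree_interpolate_le _ hinj)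
  have hPsmooth : ContDiff ℝ k (fun t => P.eval t) := by
    simpa using P.contDiff_aeval (R := ℝ) (𝕜 := ℝ) k
  have hIoo : Ioo (x 0) (x k) ⊆ J := Ioo_subset_Icc_self.trans hJ
  obtain ⟨ξ, hξ, hξ0⟩ := exists_iteratedDeriv_eq_zero hk (f := fun t => g t - P.eval t) hx
    (fun i hi => sub_eq_zero.2 (Lagrange.eval_interpolate_at_node (fun i => g (x i)) hinj
      (Finset.mem_range_succ_iff.2 hi)).symm)
    ((hg.continuousOn.mono hJ).sub hPsmooth.continuous.continuousOn)
    ((hg.mono hIoo).sub hPsmooth.contDiffOn)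
  have hJξ : J ∈ 𝓝 ξ := Filter.mem_of_superset (isOpen_Ioo.mem_nhds hξ) hIoo
  refine ⟨ξ, mem_of_mem_nhds hJξ, ?_⟩
  rw [iteratedDerivWithin_of_mem_nhds hJξ, ← Lagrange.coeff_card_sub_one_interpolate hinj, hcard,
    ← P.iteratedDeriv_eval_of_natDegree_le hP ξ, ← sub_eq_zero, ← hξ0]
  simp only [iteratedDeriv, fun_iteratedFDeriv_sub_apply (hg.contDiffAt hJξ) hPsmooth.contDiffAt,
    sub_apply]

theorem abs_dividedDifference_le {ι : Type*} [DecidableEq ι] {s : Finset ι} {x r : ι → ℝ}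
    {γ h : ℝ} (hγ : 0 < γ) (hx : ∀ i ∈ s, ∀ j ∈ s, i ≠ j → γ ≤ |x i - x j|)
    (hr : ∀ i ∈ s, |r i| ≤ h) :
    |dividedDifference s x r| ≤ s.card * h / γ ^ (s.card - 1) := by
  have hterm : ∀ i ∈ s, |r i / ∏ j ∈ s.erase i, (x i - x j)| ≤ h / γ ^ (s.card - 1) := by
    intro i hi
    have hprod : γ ^ (s.card - 1) ≤ ∏ j ∈ s.erase i, |x i - x j| := by
      rw [← Finset.card_erase_of_mem hi, ← Finset.prod_const]
      exact Finset.prod_le_prod (fun _ _ => hγ.le) fun j hj =>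
        hx i hi j (Finset.mem_of_mem_erase hj) (Finset.ne_of_mem_erase hj).symm
    rw [abs_div, Finset.abs_prod]
    exact div_le_div₀ ((abs_nonneg _).trans (hr i hi)) (hr i hi) (by positivity) hprod
  calc |dividedDifference s x r| ≤ ∑ i ∈ s, |r i / ∏ j ∈ s.erase i, (x i - x j)| :=
        Finset.abs_sum_le_sum_abs _ _
    _ ≤ ∑ _i ∈ s, h / γ ^ (s.card - 1) := Finset.sum_le_sum hterm
    _ = s.card * h / γ ^ (s.card - 1) := by rw [Finset.sum_const, nsmul_eq_mul, mul_div_assoc]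

theorem mul_pow_le_factorial_mul {k : ℕ} (hk : 1 ≤ k) {J : Set ℝ} (hJ : J.OrdConnected)
    {g : ℝ → ℝ} (hg : ContDiffOn ℝ k g J) {d : ℝ}
    (hd : ∀ τ ∈ J, d ≤ |iteratedDerivWithin k g J τ|) {x : ℕ → ℝ} (hxJ : ∀ i ≤ k, x i ∈ J)
    {h : ℝ} (hgx : ∀ i ≤ k, |g (x i)| ≤ h) {γ : ℝ} (hγ : 0 < γ)
    (hx : ∀ i < k, x i + γ ≤ x (i + 1)) :
    d * γ ^ k ≤ (k + 1)! * h := by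
  have hmono : MonotoneOn x (Iic k) :=
    (strictMonoOn_Iic_of_lt_succ fun i hi =>
      (lt_add_of_pos_right _ hγ).trans_le (hx i hi)).monotoneOn
  have hgap : ∀ i j, i < j → j ≤ k → x i + γ ≤ x j := fun i j hij hj =>
    (hx i (by omega)).trans (hmono (by simp; omega) (by simpa using hj) hij)
  have hsep : ∀ i ∈ Finset.range (k + 1), ∀ j ∈ Finset.range (k + 1), i ≠ j →
      γ ≤ |x i - x j| := by
    intro i hi j hj hij
    rw [Finset.mem_range_succ_iff] at hi hj
    rcases hij.lt_or_gt with hij | hij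
    · exact (by linarith [hgap i j hij hj] : γ ≤ -(x i - x j)).trans (neg_le_abs _)
    · exact (by linarith [hgap j i hij hi] : γ ≤ x i - x j).trans (le_abs_self _)
  obtain ⟨ξ, hξ, hξeq⟩ := exists_iteratedDerivWithin_eq_factorial_mul_dividedDifference hk hg
    (fun i hi => (lt_add_of_pos_right _ hγ).trans_le (hx i hi))
    (hJ.out (hxJ 0 (by omega)) (hxJ k le_rfl))
  have hdd := abs_dividedDifference_le hγ hsep (r := fun i => g (x i))
    fun i hi => hgx i (Finset.mem_range_succ_iff.1 hi)
  rw [Finset.card_range, Nat.add_sub_cancel] at hdd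
  have hdk : d ≤ k ! * ((k + 1 : ℕ) * h / γ ^ k) := by
    calc d ≤ |iteratedDerivWithin k g J ξ| := hd ξ hξ
      _ = k ! * |dividedDifference (Finset.range (k + 1)) x (fun i => g (x i))| := by
        rw [hξeq, abs_mul, Nat.abs_cast]
      _ ≤ _ := by gcongr
  rw [← le_div_iff₀ (by positivity)]
  refine hdk.trans_eq ?_
  rw [Nat.factorial_succ]
  push_cast
  ring

theorem exists_spaced_seq_of_bddBelow_of_lt_volume {γ : ℝ} (k : ℕ) {S : Set ℝ} (hS : BddBelow S)
    (hk : k * ENNReal.ofReal γ < volume S) :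
    ∃ x : ℕ → ℝ, (∀ i ≤ k, x i ∈ S) ∧ ∀ i < k, x i + γ ≤ x (i + 1) := by
  induction k generalizing S with
  | zero =>
    obtain ⟨z, hz⟩ := nonempty_of_measure_ne_zero (pos_of_gt hk).ne'
    exact ⟨fun _ => z, fun _ _ => hz, fun i hi => absurd hi (Nat.not_lt_zero i)⟩
  | succ k ih =>
    have hne : S.Nonempty := nonempty_of_measure_ne_zero (pos_of_gt hk).ne'
    set a := sInf S
    -- Greedy step: start just above `inf S`, then recurse on `S ∩ Ioi (inf S + γ)`, which has
    -- lost measure at most `γ`.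
    have hleft : volume (S \ Ioi (a + γ)) ≤ ENNReal.ofReal γ := by
      calc volume (S \ Ioi (a + γ)) ≤ volume (Icc a (a + γ)) :=
            measure_mono fun y hy => ⟨csInf_le hS hy.1, not_lt.1 hy.2⟩
        _ = ENNReal.ofReal γ := by rw [Real.volume_Icc, add_sub_cancel_left]
    have hright : k * ENNReal.ofReal γ < volume (S ∩ Ioi (a + γ)) := by
      refine (ENNReal.add_lt_add_iff_right (ENNReal.ofReal_ne_top (r := γ))).1 ?_
      calc k * ENNReal.ofReal γ + ENNReal.ofReal γ = (k + 1 : ℕ) * ENNReal.ofReal γ := by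
            push_cast; ring
        _ < volume S := hk
        _ ≤ volume (S ∩ Ioi (a + γ)) + volume (S \ Ioi (a + γ)) :=
            measure_le_inter_add_sdiff _ _ _
        _ ≤ volume (S ∩ Ioi (a + γ)) + ENNReal.ofReal γ := by gcongr
    obtain ⟨y, hyS, hy⟩ := ih (hS.mono inter_subset_left) hright
    obtain ⟨z, hzS, hz⟩ := exists_lt_of_csInf_lt hne
      (show a < y 0 - γ by linarith [(hyS 0 (Nat.zero_le k)).2.out])
    refine ⟨fun | 0 => z | i + 1 => y i, fun i hi => ?_, fun i hi => ?_⟩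
    · cases i with
      | zero => exact hzS
      | succ i => exact (hyS i (by omega)).1
    · cases i with
      | zero => exact (lt_sub_iff_add_lt.1 hz).le
      | succ i => exact hy i (by omega)

theorem exists_spaced_seq_of_lt_volume {γ : ℝ} {k : ℕ} {S : Set ℝ}
    (hk : k * ENNReal.ofReal γ < volume S) :
    ∃ x : ℕ → ℝ, (∀ i ≤ k, x i ∈ S) ∧ ∀ i < k, x i + γ ≤ x (i + 1) := by
  have hS : S = ⋃ n : ℕ, S ∩ Ici (-n) := by
    ext y
    simpa [neg_le] using fun _ => exists_nat_ge (-y)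
  have hmono : Monotone fun n : ℕ => S ∩ Ici (-n) := fun m n hmn =>
    inter_subset_inter_right _ (Ici_subset_Ici.2 (by simpa using hmn))
  rw [hS, hmono.measure_iUnion] at hk
  obtain ⟨n, hn⟩ := lt_iSup_iff.1 hk
  obtain ⟨x, hxS, hx⟩ :=
    exists_spaced_seq_of_bddBelow_of_lt_volume k bddBelow_Ici.inter_of_right hn
  exact ⟨x, fun i hi => (hxS i hi).1, hx⟩

theorem volume_le_of_forall_spaced_seq {S : Set ℝ} {k : ℕ} {A : ℝ}
    (hA : ∀ γ > 0, ∀ x : ℕ → ℝ, (∀ i ≤ k, x i ∈ S) → (∀ i < k, x i + γ ≤ x (i + 1)) → γ ≤ A) :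
    volume S ≤ ENNReal.ofReal (k * A) := by
  by_contra! hlt
  obtain ⟨r, -, hAr, hrS⟩ := ENNReal.lt_iff_exists_real_btwn.1 hlt
  obtain ⟨hAr, hr⟩ := (ENNReal.ofReal_lt_ofReal_iff'.1 hAr)
  set B := max A 0
  have hBr : k * B < r := by
    rcases le_total A 0 with hA0 | hA0
    · simpa [B, hA0] using hr
    · simpa [B, hA0] using hAr
  set γ := B + (r - k * B) / (k + 1)
  have hBγ : B < γ := lt_add_of_pos_right _ (div_pos (sub_pos.2 hBr) (by positivity))
  have hγr : k * γ < r := by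
    have : (k : ℝ) / (k + 1) * (r - k * B) < r - k * B :=
      mul_lt_of_lt_one_left (sub_pos.2 hBr) ((div_lt_one (by positivity)).2 (lt_add_one _))
    calc (k : ℝ) * γ = k * B + k / (k + 1) * (r - k * B) := by ring
      _ < r := by linarith
  have hγS : k * ENNReal.ofReal γ < volume S := by
    rw [← ENNReal.ofReal_natCast, ← ENNReal.ofReal_mul (Nat.cast_nonneg k)]
    exact (ENNReal.ofReal_le_ofReal hγr.le).trans_lt hrS
  obtain ⟨x, hxS, hx⟩ := exists_spaced_seq_of_lt_volume hγS
  have := hA γ ((le_max_right A 0).trans_lt hBγ) x hxS hx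
  linarith [le_max_left A 0]

theorem Nat.factorial_succ_le_two_mul_prod_Icc {p : ℕ} (hp : 1 ≤ p) :
    (p + 1)! ≤ 2 * ∏ i ∈ Finset.Icc 2 p, 2 * i := by
  induction p, hp using Nat.le_induction with
  | base => decide
  | succ p hp ih =>
    rw [← Finset.insert_Icc_right_eq_Icc_add_one (by omega),
      Finset.prod_insert (by simp), Nat.factorial_succ]
    nlinarith

theorem natCast_mul_rpow_factorial_div_le {p : ℕ} (hp : 1 ≤ p) {d : ℝ} (hd : 0 < d) :
    p * (((p + 1)! : ℝ) / d) ^ ((1 : ℝ) / p) ≤ 2 * ((∑ i ∈ Finset.Icc 2 p, (i : ℝ)) + d⁻¹) := by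
  set s := Finset.Icc 1 p
  set z : ℕ → ℝ := Function.update (fun i => 2 * i) 1 (2 / d)
  have h1 : 1 ∈ s := Finset.left_mem_Icc.2 hp
  have hs : s \ {1} = Finset.Icc 2 p := by
    rw [Finset.sdiff_singleton_eq_erase, Finset.Icc_erase_left, ← Finset.Icc_add_one_left_eq_Ioc]
    rfl
  have hcard : (s.card : ℝ) = p := by simp [s]
  have hz : ∀ i ∈ s, 0 ≤ z i := fun i _ => by
    simp only [z, Function.update_apply]
    split_ifs <;> positivity
  have hprod : ((p + 1)! : ℝ) / d ≤ ∏ i ∈ s, z i := by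
    rw [Finset.prod_update_of_mem h1, hs, mul_comm, ← mul_div_assoc, mul_comm _ (2 : ℝ)]
    gcongr
    exact_mod_cast Nat.factorial_succ_le_two_mul_prod_Icc hp
  have hsum : ∑ i ∈ s, z i = 2 * ((∑ i ∈ Finset.Icc 2 p, (i : ℝ)) + d⁻¹) := by
    rw [Finset.sum_update_of_mem h1, hs, ← Finset.mul_sum]
    ring
  have hamgm := Real.geom_mean_le_arith_mean s (fun _ => 1) z (fun _ _ => zero_le_one)
    (by simp [s]; omega) hz
  simp only [Real.rpow_one, Finset.sum_const, nsmul_eq_mul, mul_one, one_mul, hcard] at hamgm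
  calc (p : ℝ) * (((p + 1)! : ℝ) / d) ^ ((1 : ℝ) / p) ≤ p * (∏ i ∈ s, z i) ^ (p : ℝ)⁻¹ := by
        rw [one_div]; gcongr
    _ ≤ ∑ i ∈ s, z i := by rwa [← le_div_iff₀' (by positivity)]
    _ = _ := hsum

/-- If `g` is `p`-times differentiable on an interval `J ⊂ ℝ` with
`|g^{(p)}| ≥ d > 0` on `J`, then for every `h > 0` the Lebesgue measure of
`J_h = {τ ∈ J : |g(τ)| < h}` is at most `M h^(1/p)`, where
`M = 2(2 + 3 + ⋯ + p + d⁻¹)`. -/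
theorem stmt_4 (p : ℕ) (hp : 1 ≤ p) (J : Set ℝ) (hJ : J.OrdConnected)
    (g : ℝ → ℝ) (d : ℝ) (hd : 0 < d)
    (hg : ContDiffOn ℝ p g J)
    (hders : ∀ τ ∈ J, d ≤ |iteratedDerivWithin p g J τ|)
    (h : ℝ) (hh : 0 < h) :
    volume {τ : ℝ | τ ∈ J ∧ |g τ| < h}
      ≤ ENNReal.ofReal (2 * ((∑ i ∈ Finset.Icc 2 p, (i : ℝ)) + d⁻¹) * h ^ ((1:ℝ)/p)) := by
  have hγ_le : ∀ γ > 0, ∀ x : ℕ → ℝ, (∀ i ≤ p, x i ∈ {τ : ℝ | τ ∈ J ∧ |g τ| < h}) →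
      (∀ i < p, x i + γ ≤ x (i + 1)) → γ ≤ (((p + 1)! : ℝ) * h / d) ^ ((1 : ℝ) / p) := by
    intro γ hγ x hx hxγ
    have hpow := mul_pow_le_factorial_mul hp hJ hg hders (fun i hi => (hx i hi).1)
      (fun i hi => (hx i hi).2.le) hγ hxγ
    rw [← Real.pow_rpow_inv_natCast hγ.le (by omega : p ≠ 0), one_div]
    gcongr
    rwa [le_div_iff₀' hd]
  calc volume {τ : ℝ | τ ∈ J ∧ |g τ| < h}
      ≤ ENNReal.ofReal (p * (((p + 1)! : ℝ) * h / d) ^ ((1 : ℝ) / p)) :=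
        volume_le_of_forall_spaced_seq hγ_le
    _ ≤ _ := by
      rw [mul_div_right_comm, Real.mul_rpow (by positivity) hh.le, ← mul_assoc]
      exact ENNReal.ofReal_le_ofReal (mul_le_mul_of_nonneg_right
        (natCast_mul_rpow_factorial_div_le hp hd) (by positivity))
end

section
/- For every m ∈ [1,2] and all integers a, b ∈ ℤ with |a| ≠ |b|, one has |√(a² + m) − √(b² + m)| ≥ (1/8)(1 + ||a| − |b||). -/
lemma key_sqrt_gap (m A B : ℝ) (hm : m ∈ Set.Icc (1:ℝ) 2) (hB : 0 ≤ B) (hA : B + 1 ≤ A) :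
    (1/8 : ℝ) * (1 + (A - B)) ≤ Real.sqrt (A^2 + m) - Real.sqrt (B^2 + m) := by
  obtain ⟨hm1, hm2⟩ := hm
  have hBm : (0:ℝ) ≤ B^2 + m := by nlinarith
  have hsB : Real.sqrt (B^2 + m) ≤ B + 3/2 := by
    rw [show B + 3/2 = Real.sqrt ((B + 3/2)^2) from (Real.sqrt_sq (by linarith)).symm]
    apply Real.sqrt_le_sqrt; nlinarith
  have hsq : Real.sqrt (B^2 + m) ^ 2 = B^2 + m := Real.sq_sqrt hBm
  have hnn : (0:ℝ) ≤ Real.sqrt (B^2 + m) := Real.sqrt_nonneg _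
  have hle : Real.sqrt (B^2 + m) + (1/8) * (1 + (A - B)) ≤ Real.sqrt (A^2 + m) := by
    rw [Real.le_sqrt (by nlinarith) (by nlinarith)]
    nlinarith [sq_nonneg (A - B - 1), mul_nonneg hB (show (0:ℝ) ≤ A - B - 1 by linarith)]
  linarith

/-- For every `m ∈ [1,2]` and all integers `a, b` with `|a| ≠ |b|`,
`|√(a² + m) − √(b² + m)| ≥ (1/8)(1 + ||a| − |b||)`. -/
theorem stmt_8 (m : ℝ) (hm : m ∈ Set.Icc (1:ℝ) 2) (a b : ℤ) (hab : |a| ≠ |b|) :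
    (1/8 : ℝ) * (1 + |(|(a : ℝ)| - |(b : ℝ)|)|) ≤
      |Real.sqrt ((a : ℝ)^2 + m) - Real.sqrt ((b : ℝ)^2 + m)| := by
  have haf : |(a : ℝ)| = ((|a| : ℤ) : ℝ) := by push_cast [Int.cast_abs]; ring
  have hbf : |(b : ℝ)| = ((|b| : ℤ) : ℝ) := by push_cast [Int.cast_abs]; ring
  have ha2 : (a:ℝ)^2 = |(a:ℝ)|^2 := (sq_abs _).symm
  have hb2 : (b:ℝ)^2 = |(b:ℝ)|^2 := (sq_abs _).symm
  rcases lt_or_gt_of_ne hab with h | h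
  · -- |a| < |b|
    have h1 : |a| + 1 ≤ |b| := h
    have h1f : |(a:ℝ)| + 1 ≤ |(b:ℝ)| := by rw [haf, hbf]; exact_mod_cast h1
    have hk := key_sqrt_gap m |(b:ℝ)| |(a:ℝ)| hm (abs_nonneg _) h1f
    have habs : |(|(a:ℝ)| - |(b:ℝ)|)| = |(b:ℝ)| - |(a:ℝ)| := by
      rw [abs_sub_comm, abs_of_nonneg (by linarith)]
    rw [habs, ha2, hb2]
    calc (1/8 : ℝ) * (1 + (|(b:ℝ)| - |(a:ℝ)|))
        ≤ Real.sqrt (|(b:ℝ)|^2 + m) - Real.sqrt (|(a:ℝ)|^2 + m) := hk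
      _ ≤ |Real.sqrt (|(a:ℝ)|^2 + m) - Real.sqrt (|(b:ℝ)|^2 + m)| := by
          rw [abs_sub_comm]; exact le_abs_self _
  · -- |b| < |a|
    have h1 : |b| + 1 ≤ |a| := h
    have h1f : |(b:ℝ)| + 1 ≤ |(a:ℝ)| := by rw [haf, hbf]; exact_mod_cast h1
    have hk := key_sqrt_gap m |(a:ℝ)| |(b:ℝ)| hm (abs_nonneg _) h1f
    have habs : |(|(a:ℝ)| - |(b:ℝ)|)| = |(a:ℝ)| - |(b:ℝ)| := by
      rw [abs_of_nonneg (by linarith)]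
    rw [habs, ha2, hb2]
    calc (1/8 : ℝ) * (1 + (|(a:ℝ)| - |(b:ℝ)|))
        ≤ Real.sqrt (|(a:ℝ)|^2 + m) - Real.sqrt (|(b:ℝ)|^2 + m) := hk
      _ ≤ |Real.sqrt (|(a:ℝ)|^2 + m) - Real.sqrt (|(b:ℝ)|^2 + m)| := le_abs_self _
end

section
/- There exists a Borel set 𝒰 ⊂ [1,2] of full Lebesgue measure (i.e. mes([1,2] \ 𝒰) = 0) such that for every m ∈ 𝒰: (i) for all integers i, j, k, l one has √(i² + m) + √(j² + m) + √(k² + m) ≠ √(l² + m); (ii) for all integers i, j, k, l, if √(i² + m) + √(j² + m) = √(k² + m) + √(l² + m), then {i², j²} = {k², l²} as multisets (equivalently {|i|, |j|} = {|k|, |l|}). -/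
open MeasureTheory

/-- Pair multiset equality. -/
lemma mpair_eq {α : Type*} {a b c d : α} :
    ({a, b} : Multiset α) = {c, d} ↔ (a = c ∧ b = d) ∨ (a = d ∧ b = c) := by
  constructor
  · intro h
    simp only [Multiset.insert_eq_cons] at h
    rcases Multiset.cons_eq_cons.1 h with ⟨h1, h2⟩ | ⟨hne, cs, h1, h2⟩
    · exact Or.inl ⟨h1, Multiset.singleton_inj.1 h2⟩
    · obtain ⟨hbc, hcs⟩ := (Multiset.singleton_eq_cons_iff _).1 h1
      subst hcs
      obtain ⟨hda, -⟩ := (Multiset.singleton_eq_cons_iff _).1 h2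
      exact Or.inr ⟨hda.symm, hbc⟩
  · rintro (⟨rfl, rfl⟩ | ⟨rfl, rfl⟩)
    · rfl
    · exact Multiset.pair_comm a b

/-- Key lemma for (ii): if the multisets differ, the equation
`√(a+m)+√(b+m) = √(c+m)+√(d+m)` holds for at most one `m ≥ 1`. -/
lemma keyB (a b c d : ℝ) (ha : 0 ≤ a) (hb : 0 ≤ b) (hc : 0 ≤ c) (hd : 0 ≤ d)
    (hne : ¬((a = c ∧ b = d) ∨ (a = d ∧ b = c))) :
    ∃ x : ℝ, ∀ m : ℝ, 1 ≤ m →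
      Real.sqrt (a + m) + Real.sqrt (b + m) = Real.sqrt (c + m) + Real.sqrt (d + m) →
      m = x := by
  have main : ∀ m : ℝ, 1 ≤ m →
      Real.sqrt (a + m) + Real.sqrt (b + m) = Real.sqrt (c + m) + Real.sqrt (d + m) →
      16 * (c+d-a-b)^2 * ((c+m)*(d+m))
        = (4*(a*b - c*d) - (c+d-a-b)^2 - 4*(c+d-a-b)*m)^2 ∧
      (a+m)*(b+m) - (c+m)*(d+m)
        = (c+d-a-b) * (Real.sqrt (c+m) * Real.sqrt (d+m)) + (c+d-a-b)^2/4 := by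
    intro m hm heq
    set A := Real.sqrt (a + m) with hA_def
    set B := Real.sqrt (b + m) with hB_def
    set C := Real.sqrt (c + m) with hC_def
    set D := Real.sqrt (d + m) with hD_def
    have hA : A^2 = a + m := Real.sq_sqrt (by linarith)
    have hB : B^2 = b + m := Real.sq_sqrt (by linarith)
    have hC : C^2 = c + m := Real.sq_sqrt (by linarith)
    have hD : D^2 = d + m := Real.sq_sqrt (by linarith)
    have h2 : 2*A*B = 2*C*D + (c+d-a-b) := by
      linear_combination (A + B + C + D) * heq - hA - hB + hC + hD
    have h3 : 4*(c+d-a-b)*(C*D)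
        = 4*(a*b - c*d) - 4*(c+d-a-b)*m - (c+d-a-b)^2 := by
      linear_combination (-(2*A*B + 2*C*D + (c+d-a-b))) * h2 + 4*B^2*hA + 4*(a+m)*hB
        - 4*D^2*hC - 4*(c+m)*hD
    constructor
    · linear_combination
        (4*(c+d-a-b)*(C*D) + (4*(a*b - c*d) - (c+d-a-b)^2 - 4*(c+d-a-b)*m)) * h3
        - 16*(c+d-a-b)^2*D^2*hC - 16*(c+d-a-b)^2*(c+m)*hD
    · linear_combination (-(1/4 : ℝ)) * h3
  by_cases hs : c + d - a - b = 0
  · -- the equation never holds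
    refine ⟨0, fun m hm heq => absurd ?_ hne⟩
    obtain ⟨-, hP⟩ := main m hm heq
    rw [hs] at hP
    have hsum : a + b = c + d := by linarith
    have hprod : a * b = c * d := by linear_combination hP - m * hsum
    have hfac : (a - c) * (a - d) = 0 := by nlinarith
    rcases mul_eq_zero.1 hfac with h | h
    · exact Or.inl ⟨by linarith, by linarith⟩
    · exact Or.inr ⟨by linarith, by linarith⟩
  · by_cases hcd : c = d
    · -- c = d, s ≠ 0: unique solution
      subst hcd
      have hcoef : (8*(a+b) - 16*c) ≠ 0 := fun h => hs (by linarith)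
      refine ⟨((4*c - a - b)^2 - 4*a*b) / (8*(a+b) - 16*c), fun m hm heq => ?_⟩
      set A := Real.sqrt (a + m) with hA_def
      set B := Real.sqrt (b + m) with hB_def
      set C := Real.sqrt (c + m) with hC_def
      have hA : A^2 = a + m := Real.sq_sqrt (by linarith)
      have hB : B^2 = b + m := Real.sq_sqrt (by linarith)
      have hC : C^2 = c + m := Real.sq_sqrt (by linarith)
      have h2 : 2*A*B = 4*c - a - b + 2*m := by
        linear_combination (A + B + 2*C) * heq - hA - hB + 4*hC
      have h4 : 4*((a+m)*(b+m)) = (4*c - a - b + 2*m)^2 := by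
        linear_combination (2*A*B + (4*c - a - b + 2*m)) * h2 - 4*B^2*hA - 4*(a+m)*hB
      rw [eq_div_iff hcoef]
      linear_combination h4
    · -- c ≠ d, s ≠ 0
      by_cases hα : 16*(c+d-a-b)^2*(c+d) + 8*(4*(a*b-c*d) - (c+d-a-b)^2)*(c+d-a-b) = 0
      · refine ⟨0, fun m hm heq => ?_⟩
        exfalso
        obtain ⟨h4, -⟩ := main m hm heq
        have hlin : (16*(c+d-a-b)^2*(c+d)
            + 8*(4*(a*b-c*d) - (c+d-a-b)^2)*(c+d-a-b)) * m
            = (4*(a*b-c*d) - (c+d-a-b)^2)^2 - 16*(c+d-a-b)^2*(c*d) := by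
          linear_combination h4
        rw [hα, zero_mul] at hlin
        have ht : 4*(a*b-c*d) - (c+d-a-b)^2 = -2*(c+d-a-b)*(c+d) := by
          have h8 : (8*(c+d-a-b)) ≠ 0 := by
            intro h; exact hs (by linarith)
          have h0 : (8*(c+d-a-b)) * ((4*(a*b-c*d) - (c+d-a-b)^2)
              + 2*(c+d-a-b)*(c+d)) = 0 := by linear_combination hα
          have := (mul_eq_zero.1 h0).resolve_left h8
          linarith
        rw [ht] at hlin
        have hkey : (-2*(c+d-a-b)*(c+d))^2 - 16*(c+d-a-b)^2*(c*d)
            = 4*(c+d-a-b)^2*(c-d)^2 := by ring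
        have hpos : 0 < 4*(c+d-a-b)^2*(c-d)^2 := by
          have h1 : c + d - a - b ≠ 0 := hs
          have h2 : c - d ≠ 0 := sub_ne_zero.2 hcd
          positivity
        linarith [hlin, hkey, hpos]
      · refine ⟨((4*(a*b-c*d) - (c+d-a-b)^2)^2 - 16*(c+d-a-b)^2*(c*d))
            / (16*(c+d-a-b)^2*(c+d) + 8*(4*(a*b-c*d) - (c+d-a-b)^2)*(c+d-a-b)),
          fun m hm heq => ?_⟩
        obtain ⟨h4, -⟩ := main m hm heq
        rw [eq_div_iff hα]
        linear_combination h4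

/-- Key lemma for (i): `√(a+m)+√(b+m)+√(c+m) = √(d+m)` holds for at most one `m ≥ 1`. -/
lemma keyA (a b c d : ℝ) (ha : 0 ≤ a) (hb : 0 ≤ b) (hc : 0 ≤ c) (hd : 0 ≤ d) :
    ∃ x : ℝ, ∀ m : ℝ, 1 ≤ m →
      Real.sqrt (a + m) + Real.sqrt (b + m) + Real.sqrt (c + m) = Real.sqrt (d + m) →
      m = x := by
  have main : ∀ m : ℝ, 1 ≤ m →
      Real.sqrt (a + m) + Real.sqrt (b + m) + Real.sqrt (c + m) = Real.sqrt (d + m) →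
      (16*(c+d-a-b)^2*(c+d) - 8*((c+d-a-b)^2 + 4*(c*d-a*b))*(c+d-a-b)) * m
        = ((c+d-a-b)^2 + 4*(c*d-a*b))^2 - 16*(c+d-a-b)^2*(c*d) ∧
      4 ≤ c+d-a-b ∧ c ≠ d := by
    intro m hm heq
    set A := Real.sqrt (a + m) with hA_def
    set B := Real.sqrt (b + m) with hB_def
    set C := Real.sqrt (c + m) with hC_def
    set D := Real.sqrt (d + m) with hD_def
    have hA : A^2 = a + m := Real.sq_sqrt (by linarith)
    have hB : B^2 = b + m := Real.sq_sqrt (by linarith)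
    have hC : C^2 = c + m := Real.sq_sqrt (by linarith)
    have hD : D^2 = d + m := Real.sq_sqrt (by linarith)
    have hA1 : 1 ≤ A := by nlinarith [Real.sqrt_nonneg (a+m), hA]
    have hB1 : 1 ≤ B := by nlinarith [Real.sqrt_nonneg (b+m), hB]
    have hC1 : 1 ≤ C := by nlinarith [Real.sqrt_nonneg (c+m), hC]
    have hD0 : 0 ≤ D := Real.sqrt_nonneg _
    have h2 : 2*A*B + 2*C*D = c+d-a-b := by
      linear_combination (A + B + D - C) * heq - hA - hB + hC + hD
    have hs4 : (4:ℝ) ≤ c+d-a-b := by nlinarith [h2]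
    have hcd : c ≠ d := by
      intro h
      subst h
      have hCD : (C - D) * (C + D) = 0 := by linear_combination hC - hD
      have hCD2 : C = D := by
        rcases mul_eq_zero.1 hCD with h' | h'
        · linarith
        · linarith
      rw [hCD2] at heq
      linarith [hA1, hB1, heq]
    have h3 : 4*(c+d-a-b)*(C*D) = ((c+d-a-b)^2 + 4*(c*d-a*b)) + 4*(c+d-a-b)*m := by
      linear_combination (2*A*B - 2*C*D + (c+d-a-b)) * h2 - 4*B^2*hA - 4*(a+m)*hB
        + 4*D^2*hC + 4*(c+m)*hD
    have h4 : 16*(c+d-a-b)^2*((c+m)*(d+m))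
        = (((c+d-a-b)^2 + 4*(c*d-a*b)) + 4*(c+d-a-b)*m)^2 := by
      linear_combination
        (4*(c+d-a-b)*(C*D) + (((c+d-a-b)^2 + 4*(c*d-a*b)) + 4*(c+d-a-b)*m)) * h3
        - 16*(c+d-a-b)^2*D^2*hC - 16*(c+d-a-b)^2*(c+m)*hD
    exact ⟨by linear_combination h4, hs4, hcd⟩
  by_cases hα : 16*(c+d-a-b)^2*(c+d) - 8*((c+d-a-b)^2 + 4*(c*d-a*b))*(c+d-a-b) = 0
  · refine ⟨0, fun m hm heq => ?_⟩
    exfalso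
    obtain ⟨hlin, hs4, hcd⟩ := main m hm heq
    rw [hα, zero_mul] at hlin
    have hs : c + d - a - b ≠ 0 := by linarith
    have ht : (c+d-a-b)^2 + 4*(c*d-a*b) = 2*(c+d-a-b)*(c+d) := by
      have h8 : (8*(c+d-a-b)) ≠ 0 := by
        intro h; exact hs (by linarith)
      have h0 : (8*(c+d-a-b)) * (2*(c+d-a-b)*(c+d)
          - ((c+d-a-b)^2 + 4*(c*d-a*b))) = 0 := by linear_combination hα
      have := (mul_eq_zero.1 h0).resolve_left h8
      linarith
    rw [ht] at hlin
    have hkey : (2*(c+d-a-b)*(c+d))^2 - 16*(c+d-a-b)^2*(c*d)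
        = 4*(c+d-a-b)^2*(c-d)^2 := by ring
    have hpos : 0 < 4*(c+d-a-b)^2*(c-d)^2 := by
      have h2 : c - d ≠ 0 := sub_ne_zero.2 hcd
      positivity
    linarith [hlin, hkey, hpos]
  · refine ⟨(((c+d-a-b)^2 + 4*(c*d-a*b))^2 - 16*(c+d-a-b)^2*(c*d))
        / (16*(c+d-a-b)^2*(c+d) - 8*((c+d-a-b)^2 + 4*(c*d-a*b))*(c+d-a-b)),
      fun m hm heq => ?_⟩
    obtain ⟨hlin, -, -⟩ := main m hm heq
    rw [eq_div_iff hα]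
    linear_combination hlin

/-- There is a Borel set `𝒰 ⊂ [1,2]` of full Lebesgue measure such
that for every `m ∈ 𝒰`: (i) `√(i²+m) + √(j²+m) + √(k²+m) ≠ √(l²+m)` for all integers
`i,j,k,l`; (ii) if `√(i²+m) + √(j²+m) = √(k²+m) + √(l²+m)` then `{|i|,|j|} = {|k|,|l|}`
as multisets. -/
theorem stmt_9 :
    ∃ U : Set ℝ, MeasurableSet U ∧ U ⊆ Set.Icc (1:ℝ) 2 ∧
      volume (Set.Icc (1:ℝ) 2 \ U) = 0 ∧
      ∀ m ∈ U,
        (∀ i j k l : ℤ,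
          Real.sqrt ((i : ℝ)^2 + m) + Real.sqrt ((j : ℝ)^2 + m)
              + Real.sqrt ((k : ℝ)^2 + m)
            ≠ Real.sqrt ((l : ℝ)^2 + m)) ∧
        (∀ i j k l : ℤ,
          Real.sqrt ((i : ℝ)^2 + m) + Real.sqrt ((j : ℝ)^2 + m)
            = Real.sqrt ((k : ℝ)^2 + m) + Real.sqrt ((l : ℝ)^2 + m) →
          ({|i|, |j|} : Multiset ℤ) = ({|k|, |l|} : Multiset ℤ)) := by
  classical
  let S1 : ℤ × ℤ × ℤ × ℤ → Set ℝ := fun q =>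
    {m : ℝ | Real.sqrt ((q.1 : ℝ)^2 + m) + Real.sqrt ((q.2.1 : ℝ)^2 + m)
        + Real.sqrt ((q.2.2.1 : ℝ)^2 + m) = Real.sqrt ((q.2.2.2 : ℝ)^2 + m)}
  let S2 : ℤ × ℤ × ℤ × ℤ → Set ℝ := fun q =>
    {m : ℝ | Real.sqrt ((q.1 : ℝ)^2 + m) + Real.sqrt ((q.2.1 : ℝ)^2 + m)
        = Real.sqrt ((q.2.2.1 : ℝ)^2 + m) + Real.sqrt ((q.2.2.2 : ℝ)^2 + m)}
  have hS1meas : ∀ q, MeasurableSet (S1 q) := by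
    intro q
    exact (isClosed_eq (by fun_prop) (by fun_prop)).measurableSet
  have hS2meas : ∀ q, MeasurableSet (S2 q) := by
    intro q
    exact (isClosed_eq (by fun_prop) (by fun_prop)).measurableSet
  let N : Set ℝ := (⋃ q : ℤ × ℤ × ℤ × ℤ, (S1 q ∩ Set.Icc 1 2)) ∪
    (⋃ q : ℤ × ℤ × ℤ × ℤ, ⋃ (_ : ({|q.1|, |q.2.1|} : Multiset ℤ) ≠ {|q.2.2.1|, |q.2.2.2|}),
      (S2 q ∩ Set.Icc 1 2))
  have hNmeas : MeasurableSet N := by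
    apply MeasurableSet.union
    · exact MeasurableSet.iUnion fun q => (hS1meas q).inter measurableSet_Icc
    · exact MeasurableSet.iUnion fun q => MeasurableSet.iUnion fun _ =>
        (hS2meas q).inter measurableSet_Icc
  have habs : ∀ i k : ℤ, ((i:ℝ)^2 = (k:ℝ)^2) → |i| = |k| := by
    intro i k h
    rw [sq_eq_sq_iff_abs_eq_abs] at h
    exact_mod_cast (by push_cast; exact h : ((|i| : ℤ) : ℝ) = ((|k| : ℤ) : ℝ))
  have hNnull : volume N = 0 := by
    apply measure_union_null
    · apply measure_iUnion_null
      intro q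
      obtain ⟨x, hx⟩ := keyA ((q.1:ℝ)^2) ((q.2.1:ℝ)^2) ((q.2.2.1:ℝ)^2) ((q.2.2.2:ℝ)^2)
        (sq_nonneg _) (sq_nonneg _) (sq_nonneg _) (sq_nonneg _)
      refine measure_mono_null ?_ (measure_singleton x)
      rintro m ⟨hmS, hm12⟩
      exact hx m hm12.1 hmS
    · apply measure_iUnion_null
      intro q
      apply measure_iUnion_null
      intro hq
      have hne : ¬(((q.1:ℝ)^2 = (q.2.2.1:ℝ)^2 ∧ (q.2.1:ℝ)^2 = (q.2.2.2:ℝ)^2) ∨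
          ((q.1:ℝ)^2 = (q.2.2.2:ℝ)^2 ∧ (q.2.1:ℝ)^2 = (q.2.2.1:ℝ)^2)) := by
        intro h
        apply hq
        rw [mpair_eq]
        rcases h with ⟨h1, h2⟩ | ⟨h1, h2⟩
        · exact Or.inl ⟨habs _ _ h1, habs _ _ h2⟩
        · exact Or.inr ⟨habs _ _ h1, habs _ _ h2⟩
      obtain ⟨x, hx⟩ := keyB ((q.1:ℝ)^2) ((q.2.1:ℝ)^2) ((q.2.2.1:ℝ)^2) ((q.2.2.2:ℝ)^2)
        (sq_nonneg _) (sq_nonneg _) (sq_nonneg _) (sq_nonneg _) hne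
      refine measure_mono_null ?_ (measure_singleton x)
      rintro m ⟨hmS, hm12⟩
      exact hx m hm12.1 hmS
  refine ⟨Set.Icc 1 2 \ N, measurableSet_Icc.diff hNmeas, Set.diff_subset, ?_, ?_⟩
  · refine measure_mono_null ?_ hNnull
    intro m hm
    by_contra hmN
    exact hm.2 ⟨hm.1, hmN⟩
  · rintro m ⟨hm12, hmN⟩
    constructor
    · intro i j k l heq
      exact hmN (Or.inl (Set.mem_iUnion.2 ⟨(i, j, k, l), heq, hm12⟩))
    · intro i j k l heq
      by_contra hne
      exact hmN (Or.inr (Set.mem_iUnion.2 ⟨(i, j, k, l),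
        Set.mem_iUnion.2 ⟨hne, heq, hm12⟩⟩))
end

section
/- Let 𝒜 ⊂ ℤ be a finite admissible set. There exists a Borel set 𝒰 ⊂ [1,2] of full Lebesgue measure such that for every m ∈ 𝒰 there is γ = γ(m) > 0 with the following property: for every (i,j,k,l) ∈ ℤ⁴ with i + j = k + l and such that at least two of the four components i, j, k, l belong to 𝒜, if Ω₁ := √(i²+m) + √(j²+m) + √(k²+m) − √(l²+m) ≠ 0 and Ω₂ := √(i²+m) + √(j²+m) − √(k²+m) − √(l²+m) ≠ 0, then |Ω₁| ≥ γ and |Ω₂| ≥ γ. -/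
namespace Stmt10

lemma sqrt_ub_small (m : ℝ) (hm4 : m ≤ 4) (hm0 : 0 ≤ m) (x : ℝ) :
    Real.sqrt (x^2 + m) ≤ |x| + 2 := by
  have h : x^2 + m ≤ (|x| + 2)^2 := by nlinarith [sq_abs x, abs_nonneg x]
  calc Real.sqrt (x^2+m) ≤ Real.sqrt ((|x|+2)^2) := Real.sqrt_le_sqrt h
    _ = |x| + 2 := Real.sqrt_sq (by positivity)

lemma sqrt_lb_abs (m : ℝ) (hm0 : 0 ≤ m) (x : ℝ) : |x| ≤ Real.sqrt (x^2 + m) := by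
  rw [← Real.sqrt_sq_eq_abs]
  exact Real.sqrt_le_sqrt (by linarith)

lemma sqrt_lb1 (m : ℝ) (hm1 : 1 ≤ m) (hm4 : m ≤ 4) (x : ℝ) :
    |x| + 1/(2*(|x|+2)) ≤ Real.sqrt (x^2+m) := by
  have h0 : (0:ℝ) ≤ x^2 + m := by positivity
  have hu := Real.sq_sqrt h0
  have hu0 := Real.sqrt_nonneg (x^2+m)
  set u := Real.sqrt (x^2+m) with hudef
  have hax : 0 ≤ |x| := abs_nonneg x
  have hx2 : |x|^2 = x^2 := sq_abs x
  have hub : u ≤ |x| + 2 := sqrt_ub_small m hm4 (by linarith) x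
  have hge : |x| ≤ u := sqrt_lb_abs m (by linarith) x
  have key : (u - |x|) * (u + |x|) = m := by nlinarith [hu, hx2]
  have h2 : (0:ℝ) < 2*(|x|+2) := by linarith
  have h3 : 1 ≤ (u - |x|)*(2*(|x|+2)) := by nlinarith
  have := (div_le_iff₀ h2).mpr h3
  linarith

lemma sqrt_ub_tail (m : ℝ) (hm2 : m ≤ 2) (hm0 : 0 ≤ m) (x : ℝ) (hx : 1 ≤ |x|) :
    Real.sqrt (x^2+m) ≤ |x| + 1/|x| := by
  have hx0 : (0:ℝ) < |x| := by linarith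
  have hinv : |x| * (1/|x|) = 1 := by field_simp
  have h : x^2 + m ≤ (|x| + 1/|x|)^2 := by nlinarith [sq_abs x, sq_nonneg (1/|x|)]
  calc Real.sqrt (x^2+m) ≤ Real.sqrt ((|x|+1/|x|)^2) := Real.sqrt_le_sqrt h
    _ = |x| + 1/|x| := Real.sqrt_sq (by positivity)

lemma g_sep (m : ℝ) (hm1 : 1 ≤ m) (hm4 : m ≤ 4) (N a b : ℝ)
    (ha : |a| ≤ N) (hb : |b| ≤ N) (hab : a + 1 ≤ b) :
    1/(2*(N+2)^2) ≤ (Real.sqrt (a^2+m) - a) - (Real.sqrt (b^2+m) - b) := by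
  have hN : 0 ≤ N := le_trans (abs_nonneg a) ha
  have h0a : (0:ℝ) ≤ a^2 + m := by positivity
  have h0b : (0:ℝ) ≤ b^2 + m := by positivity
  have hua := Real.sq_sqrt h0a
  have hvb := Real.sq_sqrt h0b
  have hu0 := Real.sqrt_nonneg (a^2+m)
  have hv0 := Real.sqrt_nonneg (b^2+m)
  set u := Real.sqrt (a^2+m) with hudef
  set v := Real.sqrt (b^2+m) with hvdef
  have hla := sqrt_lb1 m hm1 hm4 a
  have hlb := sqrt_lb1 m hm1 hm4 b
  have heps : (0:ℝ) < 1/(2*(N+2)) := by positivity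
  have hmA : 1/(2*(N+2)) ≤ 1/(2*(|a|+2)) := by
    apply one_div_le_one_div_of_le (by positivity) (by linarith)
  have hmB : 1/(2*(N+2)) ≤ 1/(2*(|b|+2)) := by
    apply one_div_le_one_div_of_le (by positivity) (by linarith)
  have huA : a + 1/(2*(N+2)) ≤ u := by
    have := le_abs_self a; linarith
  have hvB : b + 1/(2*(N+2)) ≤ v := by
    have := le_abs_self b; linarith
  have huub : u ≤ N + 2 := le_trans (sqrt_ub_small m hm4 (by linarith) a) (by linarith)
  have hvub : v ≤ N + 2 := le_trans (sqrt_ub_small m hm4 (by linarith) b) (by linarith)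
  have huv0 : 0 < u + v := by nlinarith
  -- key identity
  have key : (u - v + (b - a)) * (u + v) = (b - a) * ((u - a) + (v - b)) := by
    linear_combination hua - hvb
  have hmul : 1 * (2 * (1/(2*(N+2)))) ≤ (b - a) * ((u - a) + (v - b)) :=
    mul_le_mul (by linarith) (by linarith) (by positivity) (by linarith)
  have h5 : 2 * (1/(2*(N+2))) ≤ (u - v + (b-a)) * (u + v) := by
    rw [key]; linarith
  have ht : 0 < u - v + (b - a) := by
    by_contra hcon
    push_neg at hcon
    have : (u - v + (b-a)) * (u + v) ≤ 0 := mul_nonpos_of_nonpos_of_nonneg hcon (by linarith)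
    linarith
  have hNe : (0:ℝ) < N + 2 := by linarith
  have h6 : 2 * (1/(2*(N+2))) ≤ (u - v + (b-a)) * (2*(N+2)) := by
    have := mul_le_mul_of_nonneg_left (show u + v ≤ 2*(N+2) by linarith) (le_of_lt ht)
    linarith
  have hfin : 1 ≤ (u - v + (b-a)) * (2*(N+2)^2) := by
    have h7 := mul_le_mul_of_nonneg_right h6 (le_of_lt hNe)
    have e1 : 2 * (1/(2*(N+2))) * (N+2) = 1 := by field_simp
    nlinarith [h7, e1]
  have := (div_le_iff₀ (by positivity : (0:ℝ) < 2*(N+2)^2)).mpr hfin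
  linarith



lemma core_diff_real (m : ℝ) (hm1 : 1 ≤ m) (hm2 : m ≤ 2) (N : ℝ) (hN : 0 ≤ N)
    (a b x y : ℝ) (ha : |a| ≤ N) (hb : |b| ≤ N) (hab : 1 ≤ |a - b|)
    (hxy : x - y = b - a) (hx : 4*(N+2)^2 ≤ |x|) (hy : 4*(N+2)^2 ≤ |y|) :
    1/(8*(N+2)^2) ≤
      |Real.sqrt (a^2+m) - Real.sqrt (b^2+m) + Real.sqrt (x^2+m) - Real.sqrt (y^2+m)| := by
  have hm0 : (0:ℝ) ≤ m := by linarith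
  have hm4 : m ≤ 4 := by linarith
  have hN2 : (0:ℝ) < N + 2 := by linarith
  have hP4 : (4:ℝ) ≤ (N+2)^2 := by nlinarith
  have hq0 : (0:ℝ) < 1/(4*(N+2)^2) := by positivity
  have e2q : 1/(2*(N+2)^2) = 2*(1/(4*(N+2)^2)) := by field_simp; ring
  have e8q : 1/(8*(N+2)^2) = (1/(4*(N+2)^2))/2 := by field_simp; ring
  have habs2 : |a - b| ≤ 2*N := le_trans (abs_sub a b) (by linarith)
  have h1x : (1:ℝ) ≤ |x| := by nlinarith
  have h1y : (1:ℝ) ≤ |y| := by nlinarith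
  have hxub := sqrt_ub_tail m hm2 hm0 x h1x
  have hyub := sqrt_ub_tail m hm2 hm0 y h1y
  have hxlb := sqrt_lb_abs m hm0 x
  have hylb := sqrt_lb_abs m hm0 y
  have hqx : 1/|x| ≤ 1/(4*(N+2)^2) :=
    one_div_le_one_div_of_le (by positivity) hx
  have hqy : 1/|y| ≤ 1/(4*(N+2)^2) :=
    one_div_le_one_div_of_le (by positivity) hy
  have hba1 : b - a ≤ 2*N := by
    have : b - a ≤ |b - a| := le_abs_self _
    rw [abs_sub_comm] at this; linarith
  have hba2 : a - b ≤ 2*N := le_trans (le_abs_self _) habs2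
  rcases le_or_gt 0 x with hx0 | hx0
  · -- x ≥ 0, hence y > 0
    have hxx : |x| = x := abs_of_nonneg hx0
    have hy0 : 0 < y := by nlinarith [hxy]
    have hyy : |y| = y := abs_of_pos hy0
    rcases le_abs.mp hab with hcase | hcase
    · -- 1 ≤ a - b, i.e. b + 1 ≤ a
      have hg := g_sep m hm1 hm4 N b a hb ha (by linarith)
      refine le_abs.mpr (Or.inr ?_)
      rw [hxx] at hxub hqx hx
      rw [hyy] at hyub hqy hy
      linarith
    · -- 1 ≤ b - a, i.e. a + 1 ≤ b
      have hg := g_sep m hm1 hm4 N a b ha hb (by linarith)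
      refine le_abs.mpr (Or.inl ?_)
      rw [hxx] at hxub hqx hx
      rw [hyy] at hyub hqy hy
      linarith
  · -- x < 0, hence y < 0
    have hxx : |x| = -x := abs_of_neg hx0
    have hy0 : y < 0 := by nlinarith [hxy]
    have hyy : |y| = -y := abs_of_neg hy0
    have ena : ∀ t : ℝ, ((-t):ℝ)^2 = t^2 := fun t => by ring
    rcases le_abs.mp hab with hcase | hcase
    · -- b + 1 ≤ a : use mirrored g_sep with (-a, -b)
      have hg := g_sep m hm1 hm4 N (-a) (-b) (by rwa [abs_neg]) (by rwa [abs_neg])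
        (by linarith)
      rw [ena a, ena b] at hg
      refine le_abs.mpr (Or.inl ?_)
      rw [hxx] at hxub hqx hx
      rw [hyy] at hyub hqy hy
      linarith
    · -- a + 1 ≤ b
      have hg := g_sep m hm1 hm4 N (-b) (-a) (by rwa [abs_neg]) (by rwa [abs_neg])
        (by linarith)
      rw [ena a, ena b] at hg
      refine le_abs.mpr (Or.inr ?_)
      rw [hxx] at hxub hqx hx
      rw [hyy] at hyub hqy hy
      linarith

lemma core_sum_real (m : ℝ) (hm1 : 1 ≤ m) (hm2 : m ≤ 2) (N : ℝ) (hN : 0 ≤ N)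
    (a b x y : ℝ) (ha : |a| ≤ N) (hb : |b| ≤ N)
    (hyx : |y| ≤ |x| + |a| + |b|) (hx : 4*(N+2)^2 ≤ |x|) (hy : 4*(N+2)^2 ≤ |y|) :
    1/(8*(N+2)^2) ≤ Real.sqrt (a^2+m) + Real.sqrt (b^2+m)
      + Real.sqrt (x^2+m) - Real.sqrt (y^2+m) := by
  have hm0 : (0:ℝ) ≤ m := by linarith
  have hm4 : m ≤ 4 := by linarith
  have hN2 : (0:ℝ) < N + 2 := by linarith
  have hP4 : (4:ℝ) ≤ (N+2)^2 := by nlinarith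
  have hq0 : (0:ℝ) < 1/(4*(N+2)^2) := by positivity
  have h1y : (1:ℝ) ≤ |y| := by nlinarith
  have hyub := sqrt_ub_tail m hm2 hm0 y h1y
  have hqy : 1/|y| ≤ 1/(4*(N+2)^2) :=
    one_div_le_one_div_of_le (by positivity) hy
  have hxlb := sqrt_lb_abs m hm0 x
  have hla := sqrt_lb1 m hm1 hm4 a
  have hlb := sqrt_lb1 m hm1 hm4 b
  have hmA : 1/(2*(N+2)) ≤ 1/(2*(|a|+2)) :=
    one_div_le_one_div_of_le (by positivity) (by linarith)
  have hmB : 1/(2*(N+2)) ≤ 1/(2*(|b|+2)) :=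
    one_div_le_one_div_of_le (by positivity) (by linarith)
  have eNq : 1/(N+2) = 4*(N+2)*(1/(4*(N+2)^2)) := by field_simp
  have e1 : 2*(1/(2*(N+2))) = 1/(N+2) := by field_simp
  have hbig : 8*(1/(4*(N+2)^2)) ≤ 1/(N+2) := by
    rw [eNq]; nlinarith
  have e8q : 1/(8*(N+2)^2) = (1/(4*(N+2)^2))/2 := by field_simp; ring
  linarith

lemma core_big_real (m : ℝ) (hm1 : 1 ≤ m) (hm2 : m ≤ 2) (N : ℝ) (hN : 0 ≤ N)
    (a b x y : ℝ) (ha : |a| ≤ N) (hb : |b| ≤ N)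
    (hx : 4*(N+2)^2 ≤ |x|) (hy : 4*(N+2)^2 ≤ |y|) :
    1 ≤ Real.sqrt (x^2+m) + Real.sqrt (y^2+m)
      - Real.sqrt (a^2+m) - Real.sqrt (b^2+m) := by
  have hm0 : (0:ℝ) ≤ m := by linarith
  have hm4 : m ≤ 4 := by linarith
  have hxlb := sqrt_lb_abs m hm0 x
  have hy0 := Real.sqrt_nonneg (y^2+m)
  have hau := sqrt_ub_small m hm4 hm0 a
  have hbu := sqrt_ub_small m hm4 hm0 b
  nlinarith


lemma int_big (N B j l : ℤ) (hN : 0 ≤ N) (hB : 2*N + 4*(N+2)^2 ≤ B)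
    (hd : |j - l| ≤ 2*N) (h : B < |j| ∨ B < |l|) :
    4*(N+2)^2 ≤ |j| ∧ 4*(N+2)^2 ≤ |l| := by
  generalize hq : 4*(N+2)^2 = Q at *
  simp only [Int.abs_eq_natAbs] at *
  omega

lemma int_big' (N B j l : ℤ) (hN : 0 ≤ N) (hB : 2*N + 4*(N+2)^2 ≤ B)
    (hd : |j + l| ≤ 2*N) (h : B < |j| ∨ B < |l|) :
    4*(N+2)^2 ≤ |j| ∧ 4*(N+2)^2 ≤ |l| := by
  generalize hq : 4*(N+2)^2 = Q at *
  simp only [Int.abs_eq_natAbs] at *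
  omega

lemma finite_min (T : Finset (ℤ×ℤ×ℤ×ℤ)) (f g : ℤ×ℤ×ℤ×ℤ → ℝ) :
    ∃ γ : ℝ, 0 < γ ∧ ∀ p ∈ T, (f p ≠ 0 → γ ≤ |f p|) ∧ (g p ≠ 0 → γ ≤ |g p|) := by
  classical
  set vals := ((T.image fun p => |f p|) ∪ (T.image fun p => |g p|)).filter (fun r => 0 < r)
    with hvals
  by_cases h : vals.Nonempty
  · refine ⟨vals.min' h, ?_, ?_⟩
    · exact (Finset.mem_filter.mp (vals.min'_mem h)).2
    · intro p hp
      constructor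
      · intro hf0
        apply vals.min'_le
        exact Finset.mem_filter.mpr ⟨Finset.mem_union_left _ (Finset.mem_image_of_mem _ hp), abs_pos.mpr hf0⟩
      · intro hg0
        apply vals.min'_le
        exact Finset.mem_filter.mpr ⟨Finset.mem_union_right _ (Finset.mem_image_of_mem _ hp), abs_pos.mpr hg0⟩
  · refine ⟨1, one_pos, ?_⟩
    intro p hp
    constructor
    · intro hf0
      exfalso; apply h
      exact ⟨|f p|, Finset.mem_filter.mpr
        ⟨Finset.mem_union_left _ (Finset.mem_image_of_mem _ hp), abs_pos.mpr hf0⟩⟩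
    · intro hg0
      exfalso; apply h
      exact ⟨|g p|, Finset.mem_filter.mpr
        ⟨Finset.mem_union_right _ (Finset.mem_image_of_mem _ hp), abs_pos.mpr hg0⟩⟩

lemma pair_ik (m : ℝ) (hm1 : 1 ≤ m) (hm2 : m ≤ 2) (N : ℤ) (hN0 : 0 ≤ N)
    (i j k l : ℤ) (hsum : i + j = k + l) (hiN : |i| ≤ N) (hkN : |k| ≤ N)
    (hbig : 6*(N+2)^2 < |j| ∨ 6*(N+2)^2 < |l|)
    (hS2 : Real.sqrt ((i:ℝ)^2+m) + Real.sqrt ((j:ℝ)^2+m)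
      - Real.sqrt ((k:ℝ)^2+m) - Real.sqrt ((l:ℝ)^2+m) ≠ 0) :
    1/(8*((N:ℝ)+2)^2) ≤ |Real.sqrt ((i:ℝ)^2+m) + Real.sqrt ((j:ℝ)^2+m)
      + Real.sqrt ((k:ℝ)^2+m) - Real.sqrt ((l:ℝ)^2+m)| ∧
    1/(8*((N:ℝ)+2)^2) ≤ |Real.sqrt ((i:ℝ)^2+m) + Real.sqrt ((j:ℝ)^2+m)
      - Real.sqrt ((k:ℝ)^2+m) - Real.sqrt ((l:ℝ)^2+m)| := by
  have hNB : 2*N + 4*(N+2)^2 ≤ 6*(N+2)^2 := by nlinarith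
  have hd : |j - l| ≤ 2*N := by
    have e : j - l = k - i := by omega
    rw [e]
    simp only [Int.abs_eq_natAbs] at hiN hkN ⊢
    omega
  obtain ⟨hj4, hl4⟩ := int_big N _ j l hN0 hNB hd hbig
  have hNr : (0:ℝ) ≤ (N:ℝ) := by exact_mod_cast hN0
  have hiR : |(i:ℝ)| ≤ (N:ℝ) := by exact_mod_cast hiN
  have hkR : |(k:ℝ)| ≤ (N:ℝ) := by exact_mod_cast hkN
  have hjR : 4*((N:ℝ)+2)^2 ≤ |(j:ℝ)| := by exact_mod_cast hj4
  have hlR : 4*((N:ℝ)+2)^2 ≤ |(l:ℝ)| := by exact_mod_cast hl4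
  constructor
  · have htri : |(l:ℝ)| ≤ |(j:ℝ)| + |(i:ℝ)| + |(k:ℝ)| := by
      have h' : |l| ≤ |j| + |i| + |k| := by
        simp only [Int.abs_eq_natAbs] at *
        omega
      exact_mod_cast h'
    have h1 := core_sum_real m hm1 hm2 (N:ℝ) hNr (i:ℝ) (k:ℝ) (j:ℝ) (l:ℝ)
      hiR hkR htri hjR hlR
    refine le_trans ?_ (le_abs_self _)
    linarith
  · by_cases hik : i = k
    · exfalso
      have hjl : j = l := by omega
      subst hik; subst hjl
      exact hS2 (by ring)
    · have hone : (1:ℝ) ≤ |(i:ℝ) - (k:ℝ)| := by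
        have h' : (1:ℤ) ≤ |i - k| := by
          simp only [Int.abs_eq_natAbs]; omega
        calc (1:ℝ) = ((1:ℤ):ℝ) := by norm_num
          _ ≤ ((|i - k| : ℤ) : ℝ) := by exact_mod_cast h'
          _ = |(i:ℝ) - (k:ℝ)| := by push_cast; ring_nf
      have hxy : (j:ℝ) - (l:ℝ) = (k:ℝ) - (i:ℝ) := by
        have e : j - l = k - i := by omega
        exact_mod_cast e
      have h2 := core_diff_real m hm1 hm2 (N:ℝ) hNr (i:ℝ) (k:ℝ) (j:ℝ) (l:ℝ)
        hiR hkR hone hxy hjR hlR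
      have e : Real.sqrt ((i:ℝ)^2+m) + Real.sqrt ((j:ℝ)^2+m)
          - Real.sqrt ((k:ℝ)^2+m) - Real.sqrt ((l:ℝ)^2+m)
          = Real.sqrt ((i:ℝ)^2+m) - Real.sqrt ((k:ℝ)^2+m)
          + Real.sqrt ((j:ℝ)^2+m) - Real.sqrt ((l:ℝ)^2+m) := by ring
      rw [e]
      exact h2

lemma pair_il (m : ℝ) (hm1 : 1 ≤ m) (hm2 : m ≤ 2) (N : ℤ) (hN0 : 0 ≤ N)
    (i j k l : ℤ) (hsum : i + j = k + l) (hiN : |i| ≤ N) (hlN : |l| ≤ N)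
    (hbig : 6*(N+2)^2 < |j| ∨ 6*(N+2)^2 < |k|)
    (hS2 : Real.sqrt ((i:ℝ)^2+m) + Real.sqrt ((j:ℝ)^2+m)
      - Real.sqrt ((k:ℝ)^2+m) - Real.sqrt ((l:ℝ)^2+m) ≠ 0) :
    1/(8*((N:ℝ)+2)^2) ≤ |Real.sqrt ((i:ℝ)^2+m) + Real.sqrt ((j:ℝ)^2+m)
      + Real.sqrt ((k:ℝ)^2+m) - Real.sqrt ((l:ℝ)^2+m)| ∧
    1/(8*((N:ℝ)+2)^2) ≤ |Real.sqrt ((i:ℝ)^2+m) + Real.sqrt ((j:ℝ)^2+m)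
      - Real.sqrt ((k:ℝ)^2+m) - Real.sqrt ((l:ℝ)^2+m)| := by
  have hNB : 2*N + 4*(N+2)^2 ≤ 6*(N+2)^2 := by nlinarith
  have hd : |j - k| ≤ 2*N := by
    have e : j - k = l - i := by omega
    rw [e]
    simp only [Int.abs_eq_natAbs] at hiN hlN ⊢
    omega
  obtain ⟨hj4, hk4⟩ := int_big N _ j k hN0 hNB hd hbig
  have hNr : (0:ℝ) ≤ (N:ℝ) := by exact_mod_cast hN0
  have hiR : |(i:ℝ)| ≤ (N:ℝ) := by exact_mod_cast hiN
  have hlR : |(l:ℝ)| ≤ (N:ℝ) := by exact_mod_cast hlN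
  have hjR : 4*((N:ℝ)+2)^2 ≤ |(j:ℝ)| := by exact_mod_cast hj4
  have hkR : 4*((N:ℝ)+2)^2 ≤ |(k:ℝ)| := by exact_mod_cast hk4
  have hc1 : 1/(8*((N:ℝ)+2)^2) ≤ 1 := by
    rw [div_le_one (by positivity)]
    nlinarith
  constructor
  · have h1 := core_big_real m hm1 hm2 (N:ℝ) hNr (i:ℝ) (l:ℝ) (j:ℝ) (k:ℝ)
      hiR hlR hjR hkR
    have h0i := Real.sqrt_nonneg ((i:ℝ)^2+m)
    refine le_trans ?_ (le_abs_self _)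
    linarith
  · by_cases hil : i = l
    · exfalso
      have hjk : j = k := by omega
      subst hil; subst hjk
      exact hS2 (by ring)
    · have hone : (1:ℝ) ≤ |(i:ℝ) - (l:ℝ)| := by
        have h' : (1:ℤ) ≤ |i - l| := by
          simp only [Int.abs_eq_natAbs]; omega
        calc (1:ℝ) = ((1:ℤ):ℝ) := by norm_num
          _ ≤ ((|i - l| : ℤ) : ℝ) := by exact_mod_cast h'
          _ = |(i:ℝ) - (l:ℝ)| := by push_cast; ring_nf
      have hxy : (j:ℝ) - (k:ℝ) = (l:ℝ) - (i:ℝ) := by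
        have e : j - k = l - i := by omega
        exact_mod_cast e
      have h2 := core_diff_real m hm1 hm2 (N:ℝ) hNr (i:ℝ) (l:ℝ) (j:ℝ) (k:ℝ)
        hiR hlR hone hxy hjR hkR
      have e : Real.sqrt ((i:ℝ)^2+m) + Real.sqrt ((j:ℝ)^2+m)
          - Real.sqrt ((k:ℝ)^2+m) - Real.sqrt ((l:ℝ)^2+m)
          = Real.sqrt ((i:ℝ)^2+m) - Real.sqrt ((l:ℝ)^2+m)
          + Real.sqrt ((j:ℝ)^2+m) - Real.sqrt ((k:ℝ)^2+m) := by ring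
      rw [e]
      exact h2

lemma pair_ij (m : ℝ) (hm1 : 1 ≤ m) (hm2 : m ≤ 2) (N : ℤ) (hN0 : 0 ≤ N)
    (i j k l : ℤ) (hsum : i + j = k + l) (hiN : |i| ≤ N) (hjN : |j| ≤ N)
    (hbig : 6*(N+2)^2 < |k| ∨ 6*(N+2)^2 < |l|) :
    1/(8*((N:ℝ)+2)^2) ≤ |Real.sqrt ((i:ℝ)^2+m) + Real.sqrt ((j:ℝ)^2+m)
      + Real.sqrt ((k:ℝ)^2+m) - Real.sqrt ((l:ℝ)^2+m)| ∧
    1/(8*((N:ℝ)+2)^2) ≤ |Real.sqrt ((i:ℝ)^2+m) + Real.sqrt ((j:ℝ)^2+m)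
      - Real.sqrt ((k:ℝ)^2+m) - Real.sqrt ((l:ℝ)^2+m)| := by
  have hNB : 2*N + 4*(N+2)^2 ≤ 6*(N+2)^2 := by nlinarith
  have hd : |k + l| ≤ 2*N := by
    simp only [Int.abs_eq_natAbs] at hiN hjN ⊢
    omega
  obtain ⟨hk4, hl4⟩ := int_big' N _ k l hN0 hNB hd hbig
  have hNr : (0:ℝ) ≤ (N:ℝ) := by exact_mod_cast hN0
  have hiR : |(i:ℝ)| ≤ (N:ℝ) := by exact_mod_cast hiN
  have hjR : |(j:ℝ)| ≤ (N:ℝ) := by exact_mod_cast hjN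
  have hkR : 4*((N:ℝ)+2)^2 ≤ |(k:ℝ)| := by exact_mod_cast hk4
  have hlR : 4*((N:ℝ)+2)^2 ≤ |(l:ℝ)| := by exact_mod_cast hl4
  have hc1 : 1/(8*((N:ℝ)+2)^2) ≤ 1 := by
    rw [div_le_one (by positivity)]
    nlinarith
  constructor
  · have htri : |(l:ℝ)| ≤ |(k:ℝ)| + |(i:ℝ)| + |(j:ℝ)| := by
      have h' : |l| ≤ |k| + |i| + |j| := by
        simp only [Int.abs_eq_natAbs] at *
        omega
      exact_mod_cast h'
    have h1 := core_sum_real m hm1 hm2 (N:ℝ) hNr (i:ℝ) (j:ℝ) (k:ℝ) (l:ℝ)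
      hiR hjR htri hkR hlR
    refine le_trans ?_ (le_abs_self _)
    linarith
  · have h1 := core_big_real m hm1 hm2 (N:ℝ) hNr (i:ℝ) (j:ℝ) (k:ℝ) (l:ℝ)
      hiR hjR hkR hlR
    refine le_abs.mpr (Or.inr ?_)
    linarith

lemma pair_kl (m : ℝ) (hm1 : 1 ≤ m) (hm2 : m ≤ 2) (N : ℤ) (hN0 : 0 ≤ N)
    (i j k l : ℤ) (hsum : i + j = k + l) (hkN : |k| ≤ N) (hlN : |l| ≤ N)
    (hbig : 6*(N+2)^2 < |i| ∨ 6*(N+2)^2 < |j|) :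
    1/(8*((N:ℝ)+2)^2) ≤ |Real.sqrt ((i:ℝ)^2+m) + Real.sqrt ((j:ℝ)^2+m)
      + Real.sqrt ((k:ℝ)^2+m) - Real.sqrt ((l:ℝ)^2+m)| ∧
    1/(8*((N:ℝ)+2)^2) ≤ |Real.sqrt ((i:ℝ)^2+m) + Real.sqrt ((j:ℝ)^2+m)
      - Real.sqrt ((k:ℝ)^2+m) - Real.sqrt ((l:ℝ)^2+m)| := by
  have hNB : 2*N + 4*(N+2)^2 ≤ 6*(N+2)^2 := by nlinarith
  have hd : |i + j| ≤ 2*N := by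
    simp only [Int.abs_eq_natAbs] at hkN hlN ⊢
    omega
  obtain ⟨hi4, hj4⟩ := int_big' N _ i j hN0 hNB hd hbig
  have hNr : (0:ℝ) ≤ (N:ℝ) := by exact_mod_cast hN0
  have hkR : |(k:ℝ)| ≤ (N:ℝ) := by exact_mod_cast hkN
  have hlR : |(l:ℝ)| ≤ (N:ℝ) := by exact_mod_cast hlN
  have hiR : 4*((N:ℝ)+2)^2 ≤ |(i:ℝ)| := by exact_mod_cast hi4
  have hjR : 4*((N:ℝ)+2)^2 ≤ |(j:ℝ)| := by exact_mod_cast hj4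
  have hc1 : 1/(8*((N:ℝ)+2)^2) ≤ 1 := by
    rw [div_le_one (by positivity)]
    nlinarith
  have h1 := core_big_real m hm1 hm2 (N:ℝ) hNr (k:ℝ) (l:ℝ) (i:ℝ) (j:ℝ)
    hkR hlR hiR hjR
  have h0k := Real.sqrt_nonneg ((k:ℝ)^2+m)
  constructor
  · refine le_trans ?_ (le_abs_self _)
    linarith
  · refine le_trans ?_ (le_abs_self _)
    linarith

end Stmt10





open MeasureTheory

/-- For a finite admissible set `𝒜 ⊂ ℤ`, there is a Borel set
`𝒰 ⊂ [1,2]` of full measure such that for every `m ∈ 𝒰` there is `γ(m) > 0` with: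
for every `(i,j,k,l) ∈ ℤ⁴` with `i + j = k + l` and at least two of the four components
in `𝒜`, if `Ω₁ ≠ 0` and `Ω₂ ≠ 0` then `|Ω₁| ≥ γ` and `|Ω₂| ≥ γ`, where
`Ω₁ = √(i²+m) + √(j²+m) + √(k²+m) − √(l²+m)` and
`Ω₂ = √(i²+m) + √(j²+m) − √(k²+m) − √(l²+m)`. -/
theorem stmt_10 (A : Finset ℤ) (hadm : ∀ j ∈ A, j ≠ 0 → -j ∉ A) :
    ∃ U : Set ℝ, MeasurableSet U ∧ U ⊆ Set.Icc (1:ℝ) 2 ∧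
      volume (Set.Icc (1:ℝ) 2 \ U) = 0 ∧
      ∀ m ∈ U, ∃ γ : ℝ, 0 < γ ∧
        ∀ i j k l : ℤ, i + j = k + l →
          2 ≤ ((if i ∈ A then 1 else 0) + (if j ∈ A then 1 else 0)
              + (if k ∈ A then 1 else 0) + (if l ∈ A then 1 else 0) : ℕ) →
          Real.sqrt ((i : ℝ)^2 + m) + Real.sqrt ((j : ℝ)^2 + m)
              + Real.sqrt ((k : ℝ)^2 + m) - Real.sqrt ((l : ℝ)^2 + m) ≠ 0 →
          Real.sqrt ((i : ℝ)^2 + m) + Real.sqrt ((j : ℝ)^2 + m)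
              - Real.sqrt ((k : ℝ)^2 + m) - Real.sqrt ((l : ℝ)^2 + m) ≠ 0 →
          γ ≤ |Real.sqrt ((i : ℝ)^2 + m) + Real.sqrt ((j : ℝ)^2 + m)
              + Real.sqrt ((k : ℝ)^2 + m) - Real.sqrt ((l : ℝ)^2 + m)| ∧
          γ ≤ |Real.sqrt ((i : ℝ)^2 + m) + Real.sqrt ((j : ℝ)^2 + m)
              - Real.sqrt ((k : ℝ)^2 + m) - Real.sqrt ((l : ℝ)^2 + m)| := by
  classical
  refine ⟨Set.Icc 1 2, measurableSet_Icc, subset_rfl, by simp, ?_⟩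
  intro m hm
  obtain ⟨hm1, hm2⟩ := Set.mem_Icc.mp hm
  obtain ⟨N, hN0, hNA⟩ : ∃ N : ℤ, 0 ≤ N ∧ ∀ a ∈ A, |a| ≤ N := by
    refine ⟨((A.sup fun a => a.natAbs : ℕ) : ℤ), Int.natCast_nonneg _, fun a ha => ?_⟩
    rw [Int.abs_eq_natAbs]
    exact_mod_cast Finset.le_sup (f := fun a => a.natAbs) ha
  set B : ℤ := 6*(N+2)^2 with hBdef
  set Q : Finset (ℤ×ℤ×ℤ×ℤ) :=
    (Finset.Icc (-B) B) ×ˢ (Finset.Icc (-B) B) ×ˢ (Finset.Icc (-B) B) ×ˢ (Finset.Icc (-B) B)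
    with hQdef
  obtain ⟨γ₀, hγ₀, hγ₀p⟩ := Stmt10.finite_min Q
    (fun p => Real.sqrt ((p.1:ℝ)^2+m) + Real.sqrt ((p.2.1:ℝ)^2+m)
      + Real.sqrt ((p.2.2.1:ℝ)^2+m) - Real.sqrt ((p.2.2.2:ℝ)^2+m))
    (fun p => Real.sqrt ((p.1:ℝ)^2+m) + Real.sqrt ((p.2.1:ℝ)^2+m)
      - Real.sqrt ((p.2.2.1:ℝ)^2+m) - Real.sqrt ((p.2.2.2:ℝ)^2+m))
  set c : ℝ := 1/(8*((N:ℝ)+2)^2) with hcdef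
  have hc : 0 < c := by positivity
  refine ⟨min γ₀ c, lt_min hγ₀ hc, ?_⟩
  intro i j k l hsum hcnt hS1 hS2
  by_cases hbdd : |i| ≤ B ∧ |j| ≤ B ∧ |k| ≤ B ∧ |l| ≤ B
  · have hmem : (i,j,k,l) ∈ Q := by
      simp only [hQdef, Finset.mem_product, Finset.mem_Icc]
      exact ⟨abs_le.mp hbdd.1, abs_le.mp hbdd.2.1, abs_le.mp hbdd.2.2.1, abs_le.mp hbdd.2.2.2⟩
    have hp := hγ₀p (i,j,k,l) hmem
    exact ⟨le_trans (min_le_left _ _) (hp.1 hS1), le_trans (min_le_left _ _) (hp.2 hS2)⟩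
  · have hbig : B < |i| ∨ B < |j| ∨ B < |k| ∨ B < |l| := by
      by_contra hcon
      push_neg at hcon
      exact hbdd ⟨hcon.1, hcon.2.1, hcon.2.2.1, hcon.2.2.2⟩
    have hNleB : N ≤ B := by rw [hBdef]; nlinarith
    have hpair : (i ∈ A ∧ j ∈ A) ∨ (i ∈ A ∧ k ∈ A) ∨ (i ∈ A ∧ l ∈ A) ∨
        (j ∈ A ∧ k ∈ A) ∨ (j ∈ A ∧ l ∈ A) ∨ (k ∈ A ∧ l ∈ A) := by
      by_cases h1 : i ∈ A <;> by_cases h2 : j ∈ A <;> by_cases h3 : k ∈ A <;>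
        by_cases h4 : l ∈ A <;> simp [h1, h2, h3, h4] at hcnt ⊢ <;> tauto
    have hBu : B = 6*(N+2)^2 := hBdef
    have hboth : c ≤ |Real.sqrt ((i:ℝ)^2+m) + Real.sqrt ((j:ℝ)^2+m)
        + Real.sqrt ((k:ℝ)^2+m) - Real.sqrt ((l:ℝ)^2+m)| ∧
        c ≤ |Real.sqrt ((i:ℝ)^2+m) + Real.sqrt ((j:ℝ)^2+m)
        - Real.sqrt ((k:ℝ)^2+m) - Real.sqrt ((l:ℝ)^2+m)| := by
      rcases hpair with ⟨hu, hv⟩ | ⟨hu, hv⟩ | ⟨hu, hv⟩ | ⟨hu, hv⟩ | ⟨hu, hv⟩ | ⟨hu, hv⟩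
      · -- i, j ∈ A
        have hiN := hNA i hu; have hjN := hNA j hv
        have hb : 6*(N+2)^2 < |k| ∨ 6*(N+2)^2 < |l| := by
          rw [← hBu]
          rcases hbig with h|h|h|h
          · exact absurd h (not_lt.mpr (hiN.trans hNleB))
          · exact absurd h (not_lt.mpr (hjN.trans hNleB))
          · exact Or.inl h
          · exact Or.inr h
        exact Stmt10.pair_ij m hm1 hm2 N hN0 i j k l hsum hiN hjN hb
      · -- i, k ∈ A
        have hiN := hNA i hu; have hkN := hNA k hv
        have hb : 6*(N+2)^2 < |j| ∨ 6*(N+2)^2 < |l| := by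
          rw [← hBu]
          rcases hbig with h|h|h|h
          · exact absurd h (not_lt.mpr (hiN.trans hNleB))
          · exact Or.inl h
          · exact absurd h (not_lt.mpr (hkN.trans hNleB))
          · exact Or.inr h
        exact Stmt10.pair_ik m hm1 hm2 N hN0 i j k l hsum hiN hkN hb hS2
      · -- i, l ∈ A
        have hiN := hNA i hu; have hlN := hNA l hv
        have hb : 6*(N+2)^2 < |j| ∨ 6*(N+2)^2 < |k| := by
          rw [← hBu]
          rcases hbig with h|h|h|h
          · exact absurd h (not_lt.mpr (hiN.trans hNleB))
          · exact Or.inl h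
          · exact Or.inr h
          · exact absurd h (not_lt.mpr (hlN.trans hNleB))
        exact Stmt10.pair_il m hm1 hm2 N hN0 i j k l hsum hiN hlN hb hS2
      · -- j, k ∈ A : apply pair_ik with i and j swapped
        have hjN := hNA j hu; have hkN := hNA k hv
        have hb : 6*(N+2)^2 < |i| ∨ 6*(N+2)^2 < |l| := by
          rw [← hBu]
          rcases hbig with h|h|h|h
          · exact Or.inl h
          · exact absurd h (not_lt.mpr (hjN.trans hNleB))
          · exact absurd h (not_lt.mpr (hkN.trans hNleB))
          · exact Or.inr h
        have e1 : Real.sqrt ((j:ℝ)^2+m) + Real.sqrt ((i:ℝ)^2+m)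
            + Real.sqrt ((k:ℝ)^2+m) - Real.sqrt ((l:ℝ)^2+m)
            = Real.sqrt ((i:ℝ)^2+m) + Real.sqrt ((j:ℝ)^2+m)
            + Real.sqrt ((k:ℝ)^2+m) - Real.sqrt ((l:ℝ)^2+m) := by ring
        have e2 : Real.sqrt ((j:ℝ)^2+m) + Real.sqrt ((i:ℝ)^2+m)
            - Real.sqrt ((k:ℝ)^2+m) - Real.sqrt ((l:ℝ)^2+m)
            = Real.sqrt ((i:ℝ)^2+m) + Real.sqrt ((j:ℝ)^2+m)
            - Real.sqrt ((k:ℝ)^2+m) - Real.sqrt ((l:ℝ)^2+m) := by ring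
        have := Stmt10.pair_ik m hm1 hm2 N hN0 j i k l (by omega) hjN hkN hb
          (by rw [e2]; exact hS2)
        rw [e1, e2] at this
        exact this
      · -- j, l ∈ A : apply pair_il with i and j swapped
        have hjN := hNA j hu; have hlN := hNA l hv
        have hb : 6*(N+2)^2 < |i| ∨ 6*(N+2)^2 < |k| := by
          rw [← hBu]
          rcases hbig with h|h|h|h
          · exact Or.inl h
          · exact absurd h (not_lt.mpr (hjN.trans hNleB))
          · exact Or.inr h
          · exact absurd h (not_lt.mpr (hlN.trans hNleB))
        have e1 : Real.sqrt ((j:ℝ)^2+m) + Real.sqrt ((i:ℝ)^2+m)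
            + Real.sqrt ((k:ℝ)^2+m) - Real.sqrt ((l:ℝ)^2+m)
            = Real.sqrt ((i:ℝ)^2+m) + Real.sqrt ((j:ℝ)^2+m)
            + Real.sqrt ((k:ℝ)^2+m) - Real.sqrt ((l:ℝ)^2+m) := by ring
        have e2 : Real.sqrt ((j:ℝ)^2+m) + Real.sqrt ((i:ℝ)^2+m)
            - Real.sqrt ((k:ℝ)^2+m) - Real.sqrt ((l:ℝ)^2+m)
            = Real.sqrt ((i:ℝ)^2+m) + Real.sqrt ((j:ℝ)^2+m)
            - Real.sqrt ((k:ℝ)^2+m) - Real.sqrt ((l:ℝ)^2+m) := by ring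
        have := Stmt10.pair_il m hm1 hm2 N hN0 j i k l (by omega) hjN hlN hb
          (by rw [e2]; exact hS2)
        rw [e1, e2] at this
        exact this
      · -- k, l ∈ A
        have hkN := hNA k hu; have hlN := hNA l hv
        have hb : 6*(N+2)^2 < |i| ∨ 6*(N+2)^2 < |j| := by
          rw [← hBu]
          rcases hbig with h|h|h|h
          · exact Or.inl h
          · exact Or.inr h
          · exact absurd h (not_lt.mpr (hkN.trans hNleB))
          · exact absurd h (not_lt.mpr (hlN.trans hNleB))
        exact Stmt10.pair_kl m hm1 hm2 N hN0 i j k l hsum hkN hlN hb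
    exact ⟨le_trans (min_le_right _ _) hboth.1, le_trans (min_le_right _ _) hboth.2⟩
end

section
/- For every real α > 1/2 there exists a constant C(α) > 0 such that for all v, w : ℤ → ℂ with ‖v‖_α < ∞ and ‖w‖_α < ∞, the convolution v * w, defined by (v * w)_l = ∑_{i + j = l} v_i w_j, is well defined (each sum converges absolutely), and ‖v * w‖_α ≤ C(α) ‖v‖_α ‖w‖_α. -/
/-!
With `m s = ⟨s⟩^α`, the bound `⟨i + j⟩^α ≤ 2^α (⟨i⟩^α + ⟨j⟩^α)` dominates `m · (|v| ⋆ |w|)` by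
`2^α (|m v| ⋆ |w| + |v| ⋆ |m w|)`. Young's inequality `‖f ⋆ g‖₂ ≤ ‖f‖₂ ‖g‖₁` bounds each term by a
weighted `ℓ²` norm times an `ℓ¹` norm, and for `α > 1/2` Cauchy–Schwarz gives
`‖u‖₁² ≤ (∑ ⟨s⟩^{-2α}) ‖u‖_α²`. Everything is done with `ℝ≥0∞`-valued sums, where no summability
side conditions arise; absolute convergence of the convolution follows from finiteness of the bound.
-/

open scoped ENNReal

namespace ENNReal

variable {ι : Type*}

theorem inner_le_weight_mul_Lp_tsum {p : ℝ} (hp : 1 ≤ p) (w f : ι → ℝ≥0∞) :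
    ∑' i, w i * f i ≤ (∑' i, w i) ^ (1 - p⁻¹) * (∑' i, w i * f i ^ p) ^ p⁻¹ := by
  have hp₀ : 0 ≤ p⁻¹ := by positivity
  have hp₁ : 0 ≤ 1 - p⁻¹ := sub_nonneg.2 (inv_le_one_of_one_le₀ hp)
  refine ENNReal.summable.tsum_le_of_sum_le fun s => ?_
  calc ∑ i ∈ s, w i * f i
      ≤ (∑ i ∈ s, w i) ^ (1 - p⁻¹) * (∑ i ∈ s, w i * f i ^ p) ^ p⁻¹ :=
        inner_le_weight_mul_Lp_of_nonneg s hp w f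
    _ ≤ _ := by gcongr <;> exact ENNReal.sum_le_tsum s

theorem sq_tsum_mul_le (w f : ι → ℝ≥0∞) :
    (∑' i, w i * f i) ^ 2 ≤ (∑' i, w i) * ∑' i, w i * f i ^ 2 := by
  have h := inner_le_weight_mul_Lp_tsum one_le_two w f
  rw [show (1 : ℝ) - 2⁻¹ = 2⁻¹ by norm_num] at h
  simp only [rpow_two] at h
  calc (∑' i, w i * f i) ^ 2
      ≤ ((∑' i, w i) ^ (2⁻¹ : ℝ) * (∑' i, w i * f i ^ 2) ^ (2⁻¹ : ℝ)) ^ 2 := by gcongr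
    _ = (∑' i, w i) * ∑' i, w i * f i ^ 2 := by
        rw [mul_pow]
        exact congr_arg₂ _ (rpow_inv_natCast_pow two_ne_zero _) (rpow_inv_natCast_pow two_ne_zero _)

theorem sq_tsum_le_tsum_inv_sq_mul {m : ι → ℝ≥0∞} (hm₀ : ∀ i, m i ≠ 0) (hm : ∀ i, m i ≠ ∞)
    (u : ι → ℝ≥0∞) : (∑' i, u i) ^ 2 ≤ (∑' i, (m i)⁻¹ ^ 2) * ∑' i, (u i * m i) ^ 2 := by
  have hM (i : ι) : (m i)⁻¹ ^ 2 * m i ^ 2 = 1 := by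
    rw [← mul_pow, ENNReal.inv_mul_cancel (hm₀ i) (hm i), one_pow]
  have h₁ (i : ι) : (m i)⁻¹ ^ 2 * (u i * m i ^ 2) = u i := by
    rw [mul_left_comm, hM, mul_one]
  have h₂ (i : ι) : (m i)⁻¹ ^ 2 * (u i * m i ^ 2) ^ 2 = (u i * m i) ^ 2 := by
    calc (m i)⁻¹ ^ 2 * (u i * m i ^ 2) ^ 2 = ((m i)⁻¹ ^ 2 * m i ^ 2) * (u i * m i) ^ 2 := by ring
      _ = (u i * m i) ^ 2 := by rw [hM, one_mul]
  have h := sq_tsum_mul_le (fun i => (m i)⁻¹ ^ 2) (fun i => u i * m i ^ 2)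
  rwa [tsum_congr h₁, tsum_congr h₂] at h

end ENNReal

namespace DiscreteConvolution

variable {G : Type*} [AddCommGroup G]

theorem tsum_comp_sub_left (g : G → ℝ≥0∞) (l : G) : ∑' i, g (l - i) = ∑' i, g i :=
  (Equiv.subLeft l).tsum_eq g

theorem tsum_comp_sub_right (g : G → ℝ≥0∞) (i : G) : ∑' l, g (l - i) = ∑' l, g l :=
  (Equiv.subRight i).tsum_eq g

noncomputable def conv (f g : G → ℝ≥0∞) (l : G) : ℝ≥0∞ := ∑' i, f i * g (l - i)

theorem conv_comm (f g : G → ℝ≥0∞) : conv f g = conv g f := by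
  ext l
  rw [conv, conv, ← tsum_comp_sub_left (fun j => g j * f (l - j)) l]
  simp only [sub_sub_cancel, mul_comm]

theorem sq_conv_le (f g : G → ℝ≥0∞) (l : G) :
    conv f g l ^ 2 ≤ (∑' j, g j) * ∑' i, g (l - i) * f i ^ 2 := by
  have h := ENNReal.sq_tsum_mul_le (fun i => g (l - i)) f
  rwa [tsum_comp_sub_left, tsum_congr fun i => mul_comm (g (l - i)) (f i)] at h

theorem tsum_sq_conv_le (f g : G → ℝ≥0∞) :
    ∑' l, conv f g l ^ 2 ≤ (∑' i, f i ^ 2) * (∑' j, g j) ^ 2 := by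
  calc ∑' l, conv f g l ^ 2
      ≤ ∑' l, (∑' j, g j) * ∑' i, g (l - i) * f i ^ 2 := ENNReal.tsum_le_tsum (sq_conv_le f g)
    _ = (∑' j, g j) * ∑' i, ∑' l, f i ^ 2 * g (l - i) := by
        rw [ENNReal.tsum_mul_left, ENNReal.tsum_comm]
        simp only [mul_comm (g _)]
    _ = (∑' i, f i ^ 2) * (∑' j, g j) ^ 2 := by
        simp only [ENNReal.tsum_mul_left, tsum_comp_sub_right, ENNReal.tsum_mul_right]
        ring

theorem mul_conv_le {m : G → ℝ≥0∞} {c : ℝ≥0∞} (hm : ∀ i j, m (i + j) ≤ c * (m i + m j))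
    (f g : G → ℝ≥0∞) (l : G) :
    m l * conv f g l ≤ c * (conv (fun i => f i * m i) g l + conv f (fun j => g j * m j) l) := by
  calc m l * conv f g l = ∑' i, m (i + (l - i)) * (f i * g (l - i)) := by
        simp only [conv, add_sub_cancel, ENNReal.tsum_mul_left]
    _ ≤ ∑' i, c * (m i + m (l - i)) * (f i * g (l - i)) :=
        ENNReal.tsum_le_tsum fun i => mul_le_mul_left (hm i (l - i)) _
    _ = _ := by
        simp only [conv, ← ENNReal.tsum_add, ← ENNReal.tsum_mul_left]
        exact tsum_congr fun i => by ring

theorem tsum_sq_mul_conv_le {m : G → ℝ≥0∞} {c : ℝ≥0∞} (hm : ∀ i j, m (i + j) ≤ c * (m i + m j))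
    (hm₀ : ∀ i, m i ≠ 0) (hm_top : ∀ i, m i ≠ ∞) (f g : G → ℝ≥0∞) :
    ∑' l, (m l * conv f g l) ^ 2 ≤
      4 * c ^ 2 * (∑' i, (m i)⁻¹ ^ 2) * (∑' i, (f i * m i) ^ 2) * ∑' i, (g i * m i) ^ 2 := by
  set K := ∑' i, (m i)⁻¹ ^ 2
  set Nf := ∑' i, (f i * m i) ^ 2
  set Ng := ∑' i, (g i * m i) ^ 2
  set A := conv (fun i => f i * m i) g
  set B := conv f (fun j => g j * m j)
  have hA : ∑' l, A l ^ 2 ≤ Nf * (K * Ng) := (tsum_sq_conv_le _ _).trans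
    (mul_le_mul_right (ENNReal.sq_tsum_le_tsum_inv_sq_mul hm₀ hm_top g) _)
  have hB : ∑' l, B l ^ 2 ≤ Ng * (K * Nf) := by
    rw [show B = conv (fun j => g j * m j) f from conv_comm _ _]
    exact (tsum_sq_conv_le _ _).trans
      (mul_le_mul_right (ENNReal.sq_tsum_le_tsum_inv_sq_mul hm₀ hm_top f) _)
  have add_sq_le (a b : ℝ≥0∞) : (a + b) ^ 2 ≤ 2 * (a ^ 2 + b ^ 2) := by
    have h := ENNReal.rpow_add_le_mul_rpow_add_rpow a b one_le_two
    norm_num [ENNReal.rpow_two] at h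
    exact h
  calc ∑' l, (m l * conv f g l) ^ 2
      ≤ ∑' l, c ^ 2 * (2 * (A l ^ 2 + B l ^ 2)) := ENNReal.tsum_le_tsum fun l =>
        (pow_le_pow_left' (mul_conv_le hm f g l) 2).trans
          (by rw [mul_pow]; exact mul_le_mul_right (add_sq_le _ _) _)
    _ = 2 * c ^ 2 * (∑' l, A l ^ 2 + ∑' l, B l ^ 2) := by
        rw [← ENNReal.tsum_add, ← ENNReal.tsum_mul_left]
        exact tsum_congr fun l => by ring
    _ ≤ 2 * c ^ 2 * (Nf * (K * Ng) + Ng * (K * Nf)) := by gcongr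
    _ = 4 * c ^ 2 * K * Nf * Ng := by ring

end DiscreteConvolution

def intBracket (s : ℤ) : ℝ := max |(s : ℝ)| 1

theorem one_le_intBracket (s : ℤ) : 1 ≤ intBracket s := le_max_right _ _

theorem intBracket_pos (s : ℤ) : 0 < intBracket s := one_pos.trans_le (one_le_intBracket s)

theorem intBracket_rpow_pos (α : ℝ) (s : ℤ) : 0 < intBracket s ^ α :=
  Real.rpow_pos_of_pos (intBracket_pos s) α

theorem intBracket_add_le (i j : ℤ) : intBracket (i + j) ≤ intBracket i + intBracket j := by
  refine max_le ?_ (by linarith [one_le_intBracket i, one_le_intBracket j])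
  calc |((i + j : ℤ) : ℝ)| ≤ |(i : ℝ)| + |(j : ℝ)| := by push_cast; exact abs_add_le _ _
    _ ≤ intBracket i + intBracket j := add_le_add (le_max_left _ _) (le_max_left _ _)

theorem intBracket_add_rpow_le {α : ℝ} (hα : 0 ≤ α) (i j : ℤ) :
    intBracket (i + j) ^ α ≤ 2 ^ α * (intBracket i ^ α + intBracket j ^ α) := by
  wlog hij : intBracket j ≤ intBracket i generalizing i j
  · rw [add_comm i, add_comm (intBracket i ^ α)]
    exact this j i (le_of_not_ge hij)
  calc intBracket (i + j) ^ α ≤ (2 * intBracket i) ^ α :=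
        Real.rpow_le_rpow (intBracket_pos _).le (by linarith [intBracket_add_le i j]) hα
    _ = 2 ^ α * intBracket i ^ α := Real.mul_rpow zero_le_two (intBracket_pos i).le
    _ ≤ 2 ^ α * (intBracket i ^ α + intBracket j ^ α) := by
        gcongr
        exact le_add_of_nonneg_right (intBracket_rpow_pos α j).le

theorem summable_intBracket_rpow_neg {p : ℝ} (hp : 1 < p) :
    Summable fun s : ℤ => intBracket s ^ (-p) := by
  classical
  refine ((Real.summable_abs_int_rpow hp).update 0 1).congr fun s => ?_
  rcases eq_or_ne s 0 with rfl | hs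
  · simp [intBracket]
  · have : (1 : ℝ) ≤ |(s : ℝ)| := by exact_mod_cast Int.one_le_abs hs
    simp [intBracket, hs, max_eq_left this]

noncomputable def bracketWeight (α : ℝ) (s : ℤ) : ℝ≥0∞ := ENNReal.ofReal (intBracket s ^ α)

theorem bracketWeight_ne_zero (α : ℝ) (s : ℤ) : bracketWeight α s ≠ 0 :=
  (ENNReal.ofReal_pos.2 (intBracket_rpow_pos α s)).ne'

theorem bracketWeight_ne_top (α : ℝ) (s : ℤ) : bracketWeight α s ≠ ∞ := ENNReal.ofReal_ne_top

theorem bracketWeight_add_le {α : ℝ} (hα : 0 ≤ α) (i j : ℤ) :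
    bracketWeight α (i + j) ≤ ENNReal.ofReal (2 ^ α) * (bracketWeight α i + bracketWeight α j) := by
  rw [bracketWeight, bracketWeight, bracketWeight,
    ← ENNReal.ofReal_add (intBracket_rpow_pos α i).le (intBracket_rpow_pos α j).le,
    ← ENNReal.ofReal_mul (by positivity)]
  exact ENNReal.ofReal_le_ofReal (intBracket_add_rpow_le hα i j)

theorem enorm_mul_bracketWeight_sq {E : Type*} [SeminormedAddGroup E] (α : ℝ) (y : E) (s : ℤ) :
    (‖y‖ₑ * bracketWeight α s) ^ 2 = ENNReal.ofReal (‖y‖ ^ 2 * intBracket s ^ (2 * α)) := by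
  rw [bracketWeight, ← ofReal_norm, ← ENNReal.ofReal_mul (norm_nonneg y),
    ← ENNReal.ofReal_pow (mul_nonneg (norm_nonneg y) (intBracket_rpow_pos α s).le), mul_pow,
    show 2 * α = α * (2 : ℕ) by push_cast; ring, Real.rpow_mul_natCast (intBracket_pos s).le]

theorem tsum_enorm_mul_bracketWeight_sq {E : Type*} [SeminormedAddGroup E] {α : ℝ} {u : ℤ → E}
    (hu : Summable fun s => ‖u s‖ ^ 2 * intBracket s ^ (2 * α)) :
    ∑' s, (‖u s‖ₑ * bracketWeight α s) ^ 2 =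
      ENNReal.ofReal (∑' s, ‖u s‖ ^ 2 * intBracket s ^ (2 * α)) := by
  rw [ENNReal.ofReal_tsum_of_nonneg
    (fun s => mul_nonneg (sq_nonneg _) (intBracket_rpow_pos _ s).le) hu]
  exact tsum_congr fun s => enorm_mul_bracketWeight_sq α (u s) s

theorem tsum_inv_bracketWeight_sq_ne_top {α : ℝ} (hα : 1 / 2 < α) :
    ∑' s, (bracketWeight α s)⁻¹ ^ 2 ≠ ∞ := by
  have h := ENNReal.ofReal_tsum_of_nonneg (fun s => (intBracket_rpow_pos _ s).le)
    (summable_intBracket_rpow_neg (p := 2 * α) (by linarith))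
  have hterm (s : ℤ) :
      (bracketWeight α s)⁻¹ ^ 2 = ENNReal.ofReal (intBracket s ^ (-(2 * α))) := by
    rw [← ENNReal.inv_pow, ← one_mul (bracketWeight α s), ← enorm_one (G := ℝ),
      enorm_mul_bracketWeight_sq, norm_one, one_pow, one_mul, Real.rpow_neg (intBracket_pos s).le,
      ENNReal.ofReal_inv_of_pos (intBracket_rpow_pos _ s)]
  rw [tsum_congr hterm, ← h]
  exact ENNReal.ofReal_ne_top

noncomputable def bracketConst (α : ℝ) : ℝ≥0∞ :=
  4 * ENNReal.ofReal (2 ^ α) ^ 2 * ∑' s, (bracketWeight α s)⁻¹ ^ 2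

theorem bracketConst_ne_top {α : ℝ} (hα : 1 / 2 < α) : bracketConst α ≠ ∞ := by
  have := tsum_inv_bracketWeight_sq_ne_top hα
  unfold bracketConst
  finiteness

theorem bracketConst_pos (α : ℝ) : 0 < bracketConst α := by
  refine pos_iff_ne_zero.2 (mul_ne_zero (by simp; positivity) fun h => ?_)
  simpa [bracketWeight_ne_top] using ENNReal.tsum_eq_zero.1 h 0

theorem tsum_sq_bracketWeight_mul_conv_le {α : ℝ} (hα : 1 / 2 < α) (f g : ℤ → ℝ≥0∞) :
    ∑' l, (bracketWeight α l * DiscreteConvolution.conv f g l) ^ 2 ≤ bracketConst α *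
      (∑' s, (f s * bracketWeight α s) ^ 2) * ∑' s, (g s * bracketWeight α s) ^ 2 :=
  DiscreteConvolution.tsum_sq_mul_conv_le (bracketWeight_add_le (by linarith))
    (bracketWeight_ne_zero α) (bracketWeight_ne_top α) f g

theorem summable_and_tsum_le_toReal {ι : Type*} {a : ι → ℝ} (ha : ∀ i, 0 ≤ a i) {B : ℝ≥0∞}
    (h : ∑' i, ENNReal.ofReal (a i) ≤ B) (hB : B ≠ ∞) : Summable a ∧ ∑' i, a i ≤ B.toReal := by
  have hsum : Summable a := (ENNReal.summable_toReal (ne_top_of_le_ne_top hB h)).congr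
    fun i => ENNReal.toReal_ofReal (ha i)
  refine ⟨hsum, ?_⟩
  rw [← ENNReal.toReal_ofReal (tsum_nonneg ha), ENNReal.ofReal_tsum_of_nonneg ha hsum]
  exact ENNReal.toReal_mono hB h

theorem summable_and_tsum_weighted_conv_le {R : Type*} [NormedRing R] [NormMulClass R] {α : ℝ}
    (hα : 1 / 2 < α) {v w : ℤ → R}
    (hv : Summable fun s => ‖v s‖ ^ 2 * intBracket s ^ (2 * α))
    (hw : Summable fun s => ‖w s‖ ^ 2 * intBracket s ^ (2 * α)) :
    (∀ l, Summable fun i => ‖v i * w (l - i)‖) ∧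
      Summable (fun l => ‖∑' i, v i * w (l - i)‖ ^ 2 * intBracket l ^ (2 * α)) ∧
      ∑' l, ‖∑' i, v i * w (l - i)‖ ^ 2 * intBracket l ^ (2 * α) ≤ (bracketConst α).toReal *
        (∑' s, ‖v s‖ ^ 2 * intBracket s ^ (2 * α)) * ∑' s, ‖w s‖ ^ 2 * intBracket s ^ (2 * α) := by
  set m := bracketWeight α
  set F := DiscreteConvolution.conv (‖v ·‖ₑ) (‖w ·‖ₑ)
  set Nv := ∑' s, ‖v s‖ ^ 2 * intBracket s ^ (2 * α)
  set Nw := ∑' s, ‖w s‖ ^ 2 * intBracket s ^ (2 * α)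
  have hF : ∑' l, (m l * F l) ^ 2 ≤ bracketConst α * ENNReal.ofReal Nv * ENNReal.ofReal Nw := by
    rw [← tsum_enorm_mul_bracketWeight_sq hv, ← tsum_enorm_mul_bracketWeight_sq hw]
    exact tsum_sq_bracketWeight_mul_conv_le hα _ _
  have hfin : bracketConst α * ENNReal.ofReal Nv * ENNReal.ofReal Nw ≠ ∞ := by
    have := bracketConst_ne_top hα
    finiteness
  have habs (l : ℤ) : Summable fun i => ‖v i * w (l - i)‖ := by
    refine tsum_enorm_ne_top_iff_summable_norm.1 fun htop => ?_
    have hl := ne_top_of_le_ne_top hfin ((ENNReal.le_tsum l).trans hF)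
    simp only [enorm_mul] at htop
    simp [F, DiscreteConvolution.conv, htop, m, bracketWeight_ne_zero] at hl
  have hpt (l : ℤ) : ENNReal.ofReal (‖∑' i, v i * w (l - i)‖ ^ 2 * intBracket l ^ (2 * α)) ≤
      (m l * F l) ^ 2 := by
    rw [← enorm_mul_bracketWeight_sq, mul_comm (m l)]
    gcongr
    exact enorm_tsum_le_tsum_enorm.trans_eq (by simp only [enorm_mul]; rfl)
  obtain ⟨hsum, hle⟩ := summable_and_tsum_le_toReal
    (fun l => mul_nonneg (sq_nonneg _) (intBracket_rpow_pos _ l).le)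
    ((ENNReal.tsum_le_tsum hpt).trans hF) hfin
  have hnonneg (u : ℤ → R) : 0 ≤ ∑' s, ‖u s‖ ^ 2 * intBracket s ^ (2 * α) :=
    tsum_nonneg fun s => mul_nonneg (sq_nonneg _) (intBracket_rpow_pos _ s).le
  refine ⟨habs, hsum, hle.trans_eq ?_⟩
  rw [ENNReal.toReal_mul, ENNReal.toReal_mul, ENNReal.toReal_ofReal (hnonneg v),
    ENNReal.toReal_ofReal (hnonneg w)]

/-- For `α > 1/2` there is `C(α) > 0` such that for all `v, w : ℤ → ℂ`
with finite weighted norms `‖·‖_α` (where `‖v‖_α² = ∑ |v_s|² ⟨s⟩^{2α}`, `⟨s⟩ = max(|s|,1)`),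
the convolution `(v * w)_l = ∑_{i+j=l} v_i w_j` is well defined (absolutely convergent),
has finite norm, and `‖v * w‖_α ≤ C(α) ‖v‖_α ‖w‖_α`. -/
theorem stmt_11 (α : ℝ) (hα : 1/2 < α) :
    ∃ C : ℝ, 0 < C ∧
      ∀ v w : ℤ → ℂ,
        Summable (fun s : ℤ => ‖v s‖^2 * (max |(s : ℝ)| 1) ^ (2*α)) →
        Summable (fun s : ℤ => ‖w s‖^2 * (max |(s : ℝ)| 1) ^ (2*α)) →
        (∀ l : ℤ, Summable (fun i : ℤ => ‖v i * w (l - i)‖)) ∧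
        Summable (fun l : ℤ => ‖∑' i : ℤ, v i * w (l - i)‖^2 * (max |(l : ℝ)| 1) ^ (2*α)) ∧
        Real.sqrt (∑' l : ℤ, ‖∑' i : ℤ, v i * w (l - i)‖^2 * (max |(l : ℝ)| 1) ^ (2*α))
          ≤ C * Real.sqrt (∑' s : ℤ, ‖v s‖^2 * (max |(s : ℝ)| 1) ^ (2*α))
              * Real.sqrt (∑' s : ℤ, ‖w s‖^2 * (max |(s : ℝ)| 1) ^ (2*α)) := by
  refine ⟨Real.sqrt (bracketConst α).toReal,
    Real.sqrt_pos.2 (ENNReal.toReal_pos (bracketConst_pos α).ne' (bracketConst_ne_top hα)),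
    fun v w hv hw => ?_⟩
  obtain ⟨habs, hsum, hle⟩ := summable_and_tsum_weighted_conv_le hα hv hw
  refine ⟨habs, hsum, (Real.sqrt_le_sqrt hle).trans_eq ?_⟩
  have hnonneg (u : ℤ → ℂ) : 0 ≤ ∑' s : ℤ, ‖u s‖ ^ 2 * intBracket s ^ (2 * α) :=
    tsum_nonneg fun s => mul_nonneg (sq_nonneg _) (intBracket_rpow_pos _ s).le
  rw [Real.sqrt_mul (mul_nonneg ENNReal.toReal_nonneg (hnonneg v)),
    Real.sqrt_mul ENNReal.toReal_nonneg]
  rfl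
end

section
/- Let 𝒜 ⊂ ℤ be a nonempty finite admissible set and let m ∈ [1,2]. There exists ν₀ > 0 depending only on 𝒜 such that for every 0 < ν ≤ ν₀, every ρ ∈ [1,2]^𝒜, and with Λ_a(ρ) := √(a² + m) + ν (3/π) (a² + m)^{−1/2} ∑_{l ∈ 𝒜} ρ_l (l² + m)^{−1/2} for a ∈ ℤ, the following hold: (i) Λ_a(ρ) ≥ ⟨a⟩ for all a ∈ ℤ; (ii) |Λ_a(ρ) − Λ_b(ρ)| ≥ (1/8) ||a| − |b|| for all a, b ∈ ℤ with |a| ≠ |b|. -/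
open Real


private lemma sqrt_gap {m x y : ℝ} (hm1 : 1 ≤ m) (hm2 : m ≤ 2) (hy : 0 ≤ y)
    (hxy : y + 1 ≤ x) :
    Real.sqrt (y^2 + m) + (x - y)/4 ≤ Real.sqrt (x^2 + m) := by
  have hx : 0 ≤ x := by linarith
  have hu2 : Real.sqrt (x^2+m) ^ 2 = x^2 + m := Real.sq_sqrt (by positivity)
  have hv2 : Real.sqrt (y^2+m) ^ 2 = y^2 + m := Real.sq_sqrt (by positivity)
  have hu0 : 0 ≤ Real.sqrt (x^2+m) := Real.sqrt_nonneg _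
  have hv0 : 0 ≤ Real.sqrt (y^2+m) := Real.sqrt_nonneg _
  have hv : Real.sqrt (y^2+m) ≤ y + 3/2 := by
    have h1 : y^2 + m ≤ (y + 3/2)^2 := by nlinarith
    calc Real.sqrt (y^2+m) ≤ Real.sqrt ((y+3/2)^2) := Real.sqrt_le_sqrt h1
      _ = y + 3/2 := Real.sqrt_sq (by linarith)
  nlinarith [sq_nonneg (Real.sqrt (x^2+m) - Real.sqrt (y^2+m)),
    sq_nonneg (Real.sqrt (x^2+m) + Real.sqrt (y^2+m))]

private lemma gap_case {m ν S : ℝ} (hm1 : 1 ≤ m) (hm2 : m ≤ 2) (hν : 0 < ν)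
    (hS : 0 ≤ S) (hνS : ν * (3/Real.pi) * S ≤ 1/8) {a b : ℤ} (h : |b| < |a|) :
    (1/8 : ℝ) * (|(a:ℝ)| - |(b:ℝ)|) ≤
      (Real.sqrt ((a:ℝ)^2 + m) + ν * (3/Real.pi) * (Real.sqrt ((a:ℝ)^2 + m))⁻¹ * S)
      - (Real.sqrt ((b:ℝ)^2 + m) + ν * (3/Real.pi) * (Real.sqrt ((b:ℝ)^2 + m))⁻¹ * S) := by
  have hpi : 0 < Real.pi := Real.pi_pos
  set x := |(a:ℝ)| with hxdef
  set y := |(b:ℝ)| with hydef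
  have hy : 0 ≤ y := abs_nonneg _
  have hxy : y + 1 ≤ x := by
    have h' : ((|b| : ℤ) : ℝ) + 1 ≤ ((|a| : ℤ) : ℝ) := by exact_mod_cast h
    push_cast at h'
    rw [hxdef, hydef]
    linarith
  have ha2 : ((a:ℝ))^2 = x^2 := (sq_abs _).symm
  have hb2 : ((b:ℝ))^2 = y^2 := (sq_abs _).symm
  rw [ha2, hb2]
  set u := Real.sqrt (x^2 + m) with hu
  set v := Real.sqrt (y^2 + m) with hv
  have hgap : v + (x - y)/4 ≤ u := sqrt_gap hm1 hm2 hy hxy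
  have hv1 : 1 ≤ v := by
    rw [hv, show (1:ℝ) = Real.sqrt 1 by simp]
    exact Real.sqrt_le_sqrt (by nlinarith)
  have hu1 : 1 ≤ u := by linarith
  have hvpos : 0 < v := by linarith
  have hupos : 0 < u := by linarith
  have hui : u⁻¹ ≤ v⁻¹ := by
    exact inv_anti₀ hvpos (by linarith)
  have hvi1 : v⁻¹ ≤ 1 := by
    rw [inv_le_one_iff₀]; right; exact hv1
  have hui0 : 0 < u⁻¹ := by positivity
  have hP0 : 0 ≤ ν * (3/Real.pi) * S := by positivity
  have hpert : ν * (3/Real.pi) * u⁻¹ * S - ν * (3/Real.pi) * v⁻¹ * S ≥ -(1/8) := by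
    have h1 : ν * (3/Real.pi) * v⁻¹ * S ≤ ν * (3/Real.pi) * S := by
      nlinarith
    have h2 : 0 ≤ ν * (3/Real.pi) * u⁻¹ * S := by positivity
    linarith
  have hd1 : 1 ≤ x - y := by linarith
  nlinarith




/-- For a nonempty finite admissible set `𝒜 ⊂ ℤ` there is `ν₀ > 0`
depending only on `𝒜` such that for every `m ∈ [1,2]`, every `0 < ν ≤ ν₀` and every
`ρ ∈ [1,2]^𝒜`, the perturbed frequencies
`Λ_a(ρ) = √(a² + m) + ν (3/π) (a² + m)^{-1/2} ∑_{l∈𝒜} ρ_l (l² + m)^{-1/2}` satisfy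
(i) `Λ_a(ρ) ≥ ⟨a⟩` for all `a ∈ ℤ`, and
(ii) `|Λ_a(ρ) − Λ_b(ρ)| ≥ (1/8) ||a| − |b||` whenever `|a| ≠ |b|`. -/
theorem stmt_16 (A : Finset ℤ) (hA : A.Nonempty) (hadm : ∀ j ∈ A, j ≠ 0 → -j ∉ A) :
    ∃ ν₀ : ℝ, 0 < ν₀ ∧
      ∀ m ∈ Set.Icc (1:ℝ) 2, ∀ ν : ℝ, 0 < ν → ν ≤ ν₀ →
      ∀ ρ : ℤ → ℝ, (∀ a ∈ A, ρ a ∈ Set.Icc (1:ℝ) 2) →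
        (∀ a : ℤ, (max |(a : ℝ)| 1) ≤
            Real.sqrt ((a : ℝ)^2 + m) + ν * (3/Real.pi) * (Real.sqrt ((a : ℝ)^2 + m))⁻¹ *
              ∑ l ∈ A, ρ l * (Real.sqrt ((l : ℝ)^2 + m))⁻¹) ∧
        (∀ a b : ℤ, |a| ≠ |b| →
          (1/8 : ℝ) * |(|(a : ℝ)| - |(b : ℝ)|)| ≤
            |(Real.sqrt ((a : ℝ)^2 + m) + ν * (3/Real.pi) * (Real.sqrt ((a : ℝ)^2 + m))⁻¹ *
                ∑ l ∈ A, ρ l * (Real.sqrt ((l : ℝ)^2 + m))⁻¹)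
              - (Real.sqrt ((b : ℝ)^2 + m) + ν * (3/Real.pi) * (Real.sqrt ((b : ℝ)^2 + m))⁻¹ *
                ∑ l ∈ A, ρ l * (Real.sqrt ((l : ℝ)^2 + m))⁻¹)|) := by
  have hpi : 0 < Real.pi := Real.pi_pos
  have hn : 0 < (A.card : ℝ) := by
    exact_mod_cast Finset.card_pos.mpr hA
  refine ⟨Real.pi / (48 * A.card), by positivity, ?_⟩
  rintro m ⟨hm1, hm2⟩ ν hν hνν₀ ρ hρ
  set S := ∑ l ∈ A, ρ l * (Real.sqrt ((l : ℝ)^2 + m))⁻¹ with hSdef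
  have hsqrt1 : ∀ l : ℤ, 1 ≤ Real.sqrt ((l:ℝ)^2 + m) := by
    intro l
    rw [show (1:ℝ) = Real.sqrt 1 by simp]
    exact Real.sqrt_le_sqrt (by nlinarith [sq_nonneg ((l:ℝ))])
  have hS0 : 0 ≤ S := by
    apply Finset.sum_nonneg
    intro l hl
    have := (hρ l hl).1
    have h1 := hsqrt1 l
    positivity
  have hS2 : S ≤ 2 * A.card := by
    calc S ≤ ∑ _l ∈ A, (2:ℝ) := by
            apply Finset.sum_le_sum
            intro l hl
            have h1 := hsqrt1 l
            have h2 := (hρ l hl).2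
            have h3 : (Real.sqrt ((l:ℝ)^2 + m))⁻¹ ≤ 1 := by
              rw [inv_le_one_iff₀]; right; exact h1
            have h4 : 0 < (Real.sqrt ((l:ℝ)^2 + m))⁻¹ := by positivity
            nlinarith [(hρ l hl).1]
      _ = 2 * A.card := by rw [Finset.sum_const]; push_cast; ring
  have hνS : ν * (3/Real.pi) * S ≤ 1/8 := by
    have h1 : ν * (3/Real.pi) * S ≤ (Real.pi / (48 * A.card)) * (3/Real.pi) * (2 * A.card) := by
      gcongr
    calc ν * (3/Real.pi) * S ≤ _ := h1
      _ = 1/8 := by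
          field_simp
          ring
  constructor
  · intro a
    have h1 := hsqrt1 a
    have h2 : |(a:ℝ)| ≤ Real.sqrt ((a:ℝ)^2 + m) := by
      rw [show |(a:ℝ)| = Real.sqrt (|(a:ℝ)|^2) by rw [Real.sqrt_sq (abs_nonneg _)]]
      apply Real.sqrt_le_sqrt
      rw [sq_abs]; linarith
    have h3 : 0 ≤ ν * (3/Real.pi) * (Real.sqrt ((a:ℝ)^2 + m))⁻¹ * S := by
      have := hsqrt1 a
      positivity
    have : max |(a:ℝ)| 1 ≤ Real.sqrt ((a:ℝ)^2 + m) := max_le h2 h1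
    linarith
  · intro a b hab
    rcases lt_or_gt_of_ne hab with h | h
    · -- |a| < |b|
      have key := gap_case hm1 hm2 hν hS0 hνS h
      have habs : |(|(a:ℝ)| - |(b:ℝ)|)| = |(b:ℝ)| - |(a:ℝ)| := by
        rw [abs_sub_comm]
        apply abs_of_nonneg
        have : ((|a| : ℤ) : ℝ) ≤ ((|b| : ℤ) : ℝ) := by exact_mod_cast h.le
        push_cast at this
        linarith
      rw [habs, abs_sub_comm]
      exact key.trans (le_abs_self _)
    · have key := gap_case hm1 hm2 hν hS0 hνS h
      have habs : |(|(a:ℝ)| - |(b:ℝ)|)| = |(a:ℝ)| - |(b:ℝ)| := by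
        apply abs_of_nonneg
        have : ((|b| : ℤ) : ℝ) ≤ ((|a| : ℤ) : ℝ) := by exact_mod_cast h.le
        push_cast at this
        linarith
      rw [habs]
      exact key.trans (le_abs_self _)
end
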